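/- arXiv:1706.06986 — 6 statements merged into one kernel-verified Lean document; each statement's English description precedes it below -/
import Mathlib

section
/- For any short exact sequence 0 → A → E → B → 0 of Λ-modules, D(A) ∩ D(E) ⊆ D(B) and D(E) ∩ D(B) ⊆ D(A). -/
open scoped BigOperators

noncomputable section

/-- Dot product of a real vector with a dimension vector. -/
def dprod {n : ℕ} (x : Fin n → ℝ) (v : Fin n → ℕ) : ℝ := ∑ i, x i * (v i : ℝ)

/-- Slope of a dimension vector with respect to a linear stability function
`Z(x) = a·x + i b·x`. -/
def zslope {n : ℕ} (a b : Fin n → ℝ) (v : Fin n → ℕ) : ℝ := dprod a v / dprod b v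

/-- The semistability set `D(M)` of a module `M`, with respect to a dimension-vector
assignment `d`. -/
def DSet {Λ : Type} [Ring Λ] {n : ℕ}
    (d : (N : Type) → [AddCommGroup N] → [Module Λ N] → Fin n → ℕ)
    (M : Type) [AddCommGroup M] [Module Λ M] : Set (Fin n → ℝ) :=
  {x | dprod x (d M) = 0 ∧ ∀ M' : Submodule Λ M, dprod x (d ↥M') ≤ 0}

/-- A module is Schurian if it is nonzero and every nonzero endomorphism is invertible,
i.e. its endomorphism ring is a division algebra. -/
def Schurian (Λ : Type) [Ring Λ] (M : Type) [AddCommGroup M] [Module Λ M] : Prop :=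
  (∃ y : M, y ≠ 0) ∧ ∀ f : M →ₗ[Λ] M, f ≠ 0 → Function.Bijective f

/-- `X` belongs to `E(M)`: `X` admits a finite filtration with all subquotients
isomorphic to `M`. -/
def IsFiltered (Λ : Type) [Ring Λ] (M : Type) [AddCommGroup M] [Module Λ M]
    (X : Type) [AddCommGroup X] [Module Λ X] : Prop :=
  ∃ (k : ℕ) (F : Fin (k + 1) → Submodule Λ X), Monotone F ∧ F 0 = ⊥ ∧ F (Fin.last k) = ⊤ ∧
    ∀ i : Fin k, Nonempty
      ((↥(F i.succ) ⧸ Submodule.comap (F i.succ).subtype (F i.castSucc)) ≃ₗ[Λ] M)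

/-- Slope at time `t` of a dimension vector, for a nonlinear stability function
`Z_t(x) = a_t·x + i b_t·x`. -/
def muZ {n : ℕ} (a b : ℝ → Fin n → ℝ) (t : ℝ) (v : Fin n → ℕ) : ℝ :=
  dprod (a t) v / dprod (b t) v

/-- `M` is `Z_t`-semistable: every nonzero submodule has zslope at least that of `M`. -/
def Semistable {Λ : Type} [Ring Λ] {n : ℕ}
    (d : (N : Type) → [AddCommGroup N] → [Module Λ N] → Fin n → ℕ)
    (a b : ℝ → Fin n → ℝ) (t : ℝ)
    (M : Type) [AddCommGroup M] [Module Λ M] : Prop :=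
  ∀ M' : Submodule Λ M, M' ≠ ⊥ → muZ a b t (d M) ≤ muZ a b t (d ↥M')

/-- The nonlinear stability function given by `(a, b)` is green (for `Λ`): at every
semistable pair `(N, t₀)` (with `N` a nonzero finite-length `Λ`-module, `N`
`Z_{t₀}`-semistable and `μ_{t₀}(N) = t₀`), the derivative of `t ↦ μ_t(N)` at `t₀`
is `< 1`. -/
def ZGreen {Λ : Type} [Ring Λ] {n : ℕ}
    (d : (N : Type) → [AddCommGroup N] → [Module Λ N] → Fin n → ℕ)
    (a b : ℝ → Fin n → ℝ) : Prop :=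
  ∀ (N : Type) [AddCommGroup N] [Module Λ N] [IsNoetherian Λ N] [IsArtinian Λ N] (t₀ : ℝ),
    (∃ y : N, y ≠ 0) → Semistable d a b t₀ N → muZ a b t₀ (d N) = t₀ →
      deriv (fun t => muZ a b t (d N)) t₀ < 1

/-- `t₀(M)`: the smallest `t` with `μ_t(M) = t` (as an infimum). -/
def tzero {n : ℕ} (a b : ℝ → Fin n → ℝ) (v : Fin n → ℕ) : ℝ := sInf {t | muZ a b t v = t}

/-- `t₁(M)`: the smallest value of `t₀(M')` over nonzero submodules `M' ⊆ M`. -/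
def tone {Λ : Type} [Ring Λ] {n : ℕ}
    (d : (N : Type) → [AddCommGroup N] → [Module Λ N] → Fin n → ℕ)
    (a b : ℝ → Fin n → ℝ)
    (M : Type) [AddCommGroup M] [Module Λ M] : ℝ :=
  sInf {s : ℝ | ∃ M' : Submodule Λ M, M' ≠ ⊥ ∧ s = tzero a b (d ↥M')}


lemma dprod_add' {n : ℕ} (x : Fin n → ℝ) (u v : Fin n → ℕ) :
    dprod x (u + v) = dprod x u + dprod x v := by
  simp [dprod, mul_add, Finset.sum_add_distrib]

/-- For any short exact sequence `0 → A → E → B → 0` of `Λ`-modules,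
`D(A) ∩ D(E) ⊆ D(B)` and `D(E) ∩ D(B) ⊆ D(A)`. -/
theorem stmt3 (Λ : Type) [Ring Λ] {n : ℕ}
    (d : (N : Type) → [AddCommGroup N] → [Module Λ N] → Fin n → ℕ)
    (hiso : ∀ (N N' : Type) [AddCommGroup N] [Module Λ N] [AddCommGroup N'] [Module Λ N']
      [IsNoetherian Λ N] [IsArtinian Λ N], (N ≃ₗ[Λ] N') → d N = d N')
    (hadd : ∀ (N : Type) [AddCommGroup N] [Module Λ N] [IsNoetherian Λ N] [IsArtinian Λ N]
      (A : Submodule Λ N), d ↥A + d (N ⧸ A) = d N)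
    (hbot : ∀ (N : Type) [AddCommGroup N] [Module Λ N] [IsNoetherian Λ N] [IsArtinian Λ N],
      (∀ y : N, y = 0) → d N = 0)
    (E : Type) [AddCommGroup E] [Module Λ E] [IsNoetherian Λ E] [IsArtinian Λ E]
    (A : Submodule Λ E) :
    (DSet d ↥A ∩ DSet d E ⊆ DSet d (E ⧸ A)) ∧
    (DSet d E ∩ DSet d (E ⧸ A) ⊆ DSet d ↥A) := by
  have hs : d ↥A + d (E ⧸ A) = d E := hadd E A
  have hsum : ∀ x : Fin n → ℝ,
      dprod x (d E) = dprod x (d ↥A) + dprod x (d (E ⧸ A)) := by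
    intro x
    rw [← hs, dprod_add']
  constructor
  · rintro x ⟨⟨hA0, hAsub⟩, hE0, hEsub⟩
    refine ⟨by have := hsum x; linarith, ?_⟩
    intro M'
    set P : Submodule Λ E := M'.comap A.mkQ with hP
    have hAP : A ≤ P := by
      intro a ha
      have : A.mkQ a = 0 := by
        simpa [Submodule.mkQ_apply] using (Submodule.Quotient.mk_eq_zero A).mpr ha
      simp [hP, Submodule.mem_comap, this]
    set f : ↥P →ₗ[Λ] E ⧸ A := A.mkQ.domRestrict P with hf
    have hker : LinearMap.ker f = A.comap P.subtype := by
      rw [hf, LinearMap.ker_domRestrict, Submodule.ker_mkQ]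
    have hrange : LinearMap.range f = M' := by
      rw [hf, LinearMap.range_domRestrict, hP,
        Submodule.map_comap_eq_of_surjective (Submodule.mkQ_surjective A)]
    have e : (↥P ⧸ A.comap P.subtype) ≃ₗ[Λ] ↥M' :=
      ((Submodule.quotEquivOfEq _ _ hker.symm).trans f.quotKerEquivRange).trans
        (LinearEquiv.ofEq _ _ hrange)
    have hdq : d (↥P ⧸ A.comap P.subtype) = d ↥M' := hiso _ _ e
    have haddP : d ↥(A.comap P.subtype) + d (↥P ⧸ A.comap P.subtype) = d ↥P :=
      hadd ↥P (A.comap P.subtype)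
    have eA : ↥(A.comap P.subtype) ≃ₗ[Λ] ↥A := Submodule.comapSubtypeEquivOfLe hAP
    have hdA : d ↥(A.comap P.subtype) = d ↥A := hiso _ _ eA
    have hsum2 : dprod x (d ↥P) = dprod x (d ↥A) + dprod x (d ↥M') := by
      rw [← haddP, dprod_add', hdA, hdq]
    have hPle : dprod x (d ↥P) ≤ 0 := hEsub P
    linarith
  · rintro x ⟨⟨hE0, hEsub⟩, hB0, hBsub⟩
    refine ⟨by have := hsum x; linarith, ?_⟩
    intro M'
    have e : ↥M' ≃ₗ[Λ] ↥(M'.map A.subtype) :=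
      Submodule.equivMapOfInjective A.subtype A.injective_subtype M'
    have hd : d ↥M' = d ↥(M'.map A.subtype) := hiso _ _ e
    rw [hd]
    exact hEsub (M'.map A.subtype)
end
end

section
/- If f : A → B is a morphism of Λ-modules with image C, then D(A) ∩ D(B) ⊆ D(C). -/
open scoped BigOperators

noncomputable section

/-- If `f : A → B` is a morphism of `Λ`-modules with image `C`, then
`D(A) ∩ D(B) ⊆ D(C)`. -/
theorem stmt4 (Λ : Type) [Ring Λ] {n : ℕ}
    (d : (N : Type) → [AddCommGroup N] → [Module Λ N] → Fin n → ℕ)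
    (hiso : ∀ (N N' : Type) [AddCommGroup N] [Module Λ N] [AddCommGroup N'] [Module Λ N']
      [IsNoetherian Λ N] [IsArtinian Λ N], (N ≃ₗ[Λ] N') → d N = d N')
    (hadd : ∀ (N : Type) [AddCommGroup N] [Module Λ N] [IsNoetherian Λ N] [IsArtinian Λ N]
      (A : Submodule Λ N), d ↥A + d (N ⧸ A) = d N)
    (hbot : ∀ (N : Type) [AddCommGroup N] [Module Λ N] [IsNoetherian Λ N] [IsArtinian Λ N],
      (∀ y : N, y = 0) → d N = 0)
    (A B : Type) [AddCommGroup A] [Module Λ A] [IsNoetherian Λ A] [IsArtinian Λ A]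
    [AddCommGroup B] [Module Λ B] [IsNoetherian Λ B] [IsArtinian Λ B]
    (f : A →ₗ[Λ] B) :
    DSet d A ∩ DSet d B ⊆ DSet d ↥(LinearMap.range f) := by
  intro x hx
  obtain ⟨⟨hA0, hAsub⟩, hB0, hBsub⟩ := hx
  have hC : d (A ⧸ LinearMap.ker f) = d ↥(LinearMap.range f) :=
    hiso _ _ f.quotKerEquivRange
  have hsplit := hadd A (LinearMap.ker f)
  constructor
  · have h1 : dprod x (d ↥(LinearMap.ker f)) + dprod x (d (A ⧸ LinearMap.ker f)) = 0 := by
      rw [← dprod_add', hsplit, hA0]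
    have h2 : dprod x (d ↥(LinearMap.range f)) ≤ 0 := hBsub _
    have h3 : dprod x (d ↥(LinearMap.ker f)) ≤ 0 := hAsub _
    rw [← hC]
    rw [← hC] at h2
    linarith
  · intro C'
    have e := Submodule.equivMapOfInjective (LinearMap.range f).subtype
      (Submodule.injective_subtype _) C'
    rw [hiso _ _ e]
    exact hBsub _
end
end

section
/- For any Λ-modules A, B, the semistability set of the direct sum satisfies D(A ⊕ B) = D(A) ∩ D(B). -/
open scoped BigOperators

noncomputable section

/-- For any `Λ`-modules `A, B`, the semistability set of the direct sum
satisfies `D(A ⊕ B) = D(A) ∩ D(B)`. -/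
theorem stmt5 (Λ : Type) [Ring Λ] {n : ℕ}
    (d : (N : Type) → [AddCommGroup N] → [Module Λ N] → Fin n → ℕ)
    (hiso : ∀ (N N' : Type) [AddCommGroup N] [Module Λ N] [AddCommGroup N'] [Module Λ N']
      [IsNoetherian Λ N] [IsArtinian Λ N], (N ≃ₗ[Λ] N') → d N = d N')
    (hadd : ∀ (N : Type) [AddCommGroup N] [Module Λ N] [IsNoetherian Λ N] [IsArtinian Λ N]
      (A : Submodule Λ N), d ↥A + d (N ⧸ A) = d N)
    (hbot : ∀ (N : Type) [AddCommGroup N] [Module Λ N] [IsNoetherian Λ N] [IsArtinian Λ N],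
      (∀ y : N, y = 0) → d N = 0)
    (A B : Type) [AddCommGroup A] [Module Λ A] [IsNoetherian Λ A] [IsArtinian Λ A]
    [AddCommGroup B] [Module Λ B] [IsNoetherian Λ B] [IsArtinian Λ B] :
    DSet d (A × B) = DSet d A ∩ DSet d B := by
  have dadd : ∀ (x : Fin n → ℝ) (u v : Fin n → ℕ),
      dprod x (u + v) = dprod x u + dprod x v := by
    intro x u v
    simp only [dprod, Pi.add_apply, Nat.cast_add, mul_add, Finset.sum_add_distrib]
  -- ker snd ≃ A
  have eA : (LinearMap.ker (LinearMap.snd Λ A B)) ≃ₗ[Λ] A := by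
    refine LinearEquiv.ofBijective
      ((LinearMap.fst Λ A B).comp (LinearMap.ker (LinearMap.snd Λ A B)).subtype) ⟨?_, ?_⟩
    · rintro ⟨⟨a, b⟩, hb⟩ ⟨⟨a', b'⟩, hb'⟩ h
      simp only [LinearMap.mem_ker, LinearMap.snd_apply] at hb hb'
      simp only [LinearMap.comp_apply, Submodule.subtype_apply, LinearMap.fst_apply] at h
      subst hb hb' h; rfl
    · intro a
      exact ⟨⟨(a, 0), by simp⟩, rfl⟩
  have eB : ((A × B) ⧸ (LinearMap.ker (LinearMap.snd Λ A B))) ≃ₗ[Λ] B :=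
    (LinearMap.snd Λ A B).quotKerEquivOfSurjective (fun b => ⟨(0, b), rfl⟩)
  have eAB : d A + d B = d (A × B) := by
    have h := hadd (A × B) (LinearMap.ker (LinearMap.snd Λ A B))
    rwa [hiso _ _ eA, hiso _ _ eB] at h
  -- ker fst ≃ B
  have eB' : (LinearMap.ker (LinearMap.fst Λ A B)) ≃ₗ[Λ] B := by
    refine LinearEquiv.ofBijective
      ((LinearMap.snd Λ A B).comp (LinearMap.ker (LinearMap.fst Λ A B)).subtype) ⟨?_, ?_⟩
    · rintro ⟨⟨a, b⟩, ha⟩ ⟨⟨a', b'⟩, ha'⟩ h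
      simp only [LinearMap.mem_ker, LinearMap.fst_apply] at ha ha'
      simp only [LinearMap.comp_apply, Submodule.subtype_apply, LinearMap.snd_apply] at h
      subst ha ha' h; rfl
    · intro b
      exact ⟨⟨(0, b), rfl⟩, rfl⟩
  ext x
  constructor
  · rintro ⟨h0, hs⟩
    rw [← eAB, dadd] at h0
    have hA1 : dprod x (d A) ≤ 0 := by
      have := hs (LinearMap.ker (LinearMap.snd Λ A B))
      rwa [hiso _ _ eA] at this
    have hB1 : dprod x (d B) ≤ 0 := by
      have := hs (LinearMap.ker (LinearMap.fst Λ A B))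
      rwa [hiso _ _ eB'] at this
    refine ⟨⟨by linarith, ?_⟩, ⟨by linarith, ?_⟩⟩
    · intro M'
      have hinj : Function.Injective (LinearMap.inl Λ A B) := LinearMap.inl_injective
      have := hs (M'.map (LinearMap.inl Λ A B))
      rwa [← hiso _ _ (Submodule.equivMapOfInjective _ hinj M')] at this
    · intro M'
      have hinj : Function.Injective (LinearMap.inr Λ A B) := LinearMap.inr_injective
      have := hs (M'.map (LinearMap.inr Λ A B))
      rwa [← hiso _ _ (Submodule.equivMapOfInjective _ hinj M')] at this
  · rintro ⟨⟨hA0, hAs⟩, hB0, hBs⟩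
    refine ⟨by rw [← eAB, dadd, hA0, hB0, add_zero], ?_⟩
    intro M'
    set f := (LinearMap.snd Λ A B).comp M'.subtype with hf
    set K := LinearMap.ker f with hK
    have hKle : dprod x (d ↥K) ≤ 0 := by
      set g := ((LinearMap.fst Λ A B).comp M'.subtype).comp K.subtype with hg
      have hginj : Function.Injective g := by
        rintro ⟨⟨⟨a, b⟩, hm⟩, hk⟩ ⟨⟨⟨a', b'⟩, hm'⟩, hk'⟩ h
        simp only [hK, hf, LinearMap.mem_ker, LinearMap.comp_apply, Submodule.subtype_apply,
          LinearMap.snd_apply] at hk hk'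
        simp only [hg, LinearMap.comp_apply, Submodule.subtype_apply, LinearMap.fst_apply] at h
        subst hk hk' h; rfl
      have := hAs (LinearMap.range g)
      rwa [← hiso ↥K ↥(LinearMap.range g) (LinearEquiv.ofInjective g hginj)] at this
    have hQle : dprod x (d (↥M' ⧸ K)) ≤ 0 := by
      have := hBs (LinearMap.range f)
      rwa [← hiso (↥M' ⧸ K) ↥(LinearMap.range f) f.quotKerEquivRange] at this
    have h := hadd ↥M' K
    calc dprod x (d ↥M') = dprod x (d ↥K) + dprod x (d (↥M' ⧸ K)) := by rw [← h, dadd]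
      _ ≤ 0 := by linarith
end
end

section
/- If M is a Schurian Λ-module, then the full subcategory E(M) of mod-Λ consisting of all modules admitting a finite filtration with all subquotients isomorphic to M is an abelian subcategory (closed under kernels and cokernels of its morphisms). -/
open scoped BigOperators

noncomputable section

/-!
Every `X ∈ E(M)` is an extension `0 → N → X → M → 0` with `N ∈ E(M)`. Since `End(M)` is a
division ring, a nonzero map `X → M` out of `X ∈ E(M)` is surjective: either it kills `N`, and
then it is a nonzero endomorphism of `M` precomposed with `X → X ⧸ N ≅ M`, or it is nonzero, hence
surjective, on `N`. It follows that the kernel of any map `X → M` lies in `E(M)`, hence so does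
`f⁻¹(N)` for every `f : X → Y` and `N ⊆ Y` with `Y ⧸ N ≅ M`. Inducting on `Y`, apply the
induction hypothesis to the restriction `f⁻¹(N) → N`: it has the same kernel as `f`, and its
cokernel is `(N + im f) ⧸ im f ⊆ Y ⧸ im f`, whose quotient `Y ⧸ (N + im f)` is `M` if `f` lands
in `N` and `0` otherwise.
-/

namespace Submodule

variable {R : Type} [Ring R] {Y : Type} [AddCommGroup Y] [Module R Y]

def comapSubtypeEquivComapSubtype (N P : Submodule R Y) :
    comap N.subtype P ≃ₗ[R] comap P.subtype N where
  toFun x := ⟨⟨x.1, x.2⟩, x.1.2⟩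
  invFun x := ⟨⟨x.1, x.2⟩, x.1.2⟩
  map_add' _ _ := rfl
  map_smul' _ _ := rfl
  left_inv _ := rfl
  right_inv _ := rfl

def quotientComapSubtypeEquivMap (N P : Submodule R Y) :
    (N ⧸ comap N.subtype P) ≃ₗ[R] map P.mkQ N :=
  (quotEquivOfEq _ _ (by rw [LinearMap.ker_comp, ker_mkQ])).trans
    (P.mkQ ∘ₗ N.subtype).quotKerEquivRange |>.trans
    (LinearEquiv.ofEq _ _ (by rw [LinearMap.range_comp, range_subtype]))

def quotientComapSubtypeEquivOfSupEqTop {N P : Submodule R Y} (h : P ⊔ N = ⊤) :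
    (N ⧸ comap N.subtype P) ≃ₗ[R] Y ⧸ P :=
  (quotientComapSubtypeEquivMap N P).trans (LinearEquiv.ofTop _ ((map_mkQ_eq_top _ _).mpr h))

def quotientComapSubtypeEquivOfLE {N A : Submodule R Y} (hA : A ≤ N) (B : Submodule R Y) :
    (comap N.subtype A ⧸ comap (comap N.subtype A).subtype (comap N.subtype B)) ≃ₗ[R]
      (A ⧸ comap A.subtype B) :=
  Quotient.equiv _ _ (comapSubtypeEquivOfLe hA) (by ext ⟨x, hx⟩; simp [mem_map_equiv])

end Submodule

theorem LinearMap.ker_sup_range_eq_top_of_surjective {R : Type} [Ring R]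
    {X Y Z : Type} [AddCommGroup X] [Module R X] [AddCommGroup Y] [Module R Y]
    [AddCommGroup Z] [Module R Z] {f : X →ₗ[R] Y} {g : Y →ₗ[R] Z}
    (h : Function.Surjective (g ∘ₗ f)) : ker g ⊔ range f = ⊤ := by
  refine eq_top_iff.mpr fun y _ => ?_
  obtain ⟨x, hx⟩ := h (g y)
  exact Submodule.mem_sup.mpr
    ⟨y - f x, by simp [← hx], f x, mem_range_self f x, sub_add_cancel y _⟩

/-- `E(M)` built up one copy of `M` at a time, from the top of the filtration. -/
inductive IsIterExt (R : Type) [Ring R] (M : Type) [AddCommGroup M] [Module R M] :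
    (X : Type) → [AddCommGroup X] → [Module R X] → Prop
  | of_subsingleton {X : Type} [AddCommGroup X] [Module R X] [Subsingleton X] : IsIterExt R M X
  | of_quotient {X : Type} [AddCommGroup X] [Module R X] (N : Submodule R X) :
      IsIterExt R M N → ((X ⧸ N) ≃ₗ[R] M) → IsIterExt R M X

section

open Submodule LinearMap Function

variable {R : Type} [Ring R] {M : Type} [AddCommGroup M] [Module R M]
  {X Y : Type} [AddCommGroup X] [Module R X] [AddCommGroup Y] [Module R Y]

theorem Schurian.bijective_of_equiv (hM : Schurian R M) (q : Y ≃ₗ[R] M) {g : Y →ₗ[R] M}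
    (hg : g ≠ 0) : Bijective g := by
  have hψ : g ∘ₗ q.symm.toLinearMap ≠ 0 := fun h => hg <| by
    ext y; simpa using congr($h (q y))
  convert (hM.2 _ hψ).comp q.bijective
  ext y; simp

theorem Schurian.bijective_liftQ (hM : Schurian R M) {N : Submodule R Y} (q : (Y ⧸ N) ≃ₗ[R] M)
    {g : Y →ₗ[R] M} (hN : N ≤ ker g) (hg : g ≠ 0) : Bijective (N.liftQ g hN) :=
  hM.bijective_of_equiv q fun h => hg <| by rw [← N.liftQ_mkQ g hN, h, zero_comp]

namespace IsIterExt

theorem of_equiv (h : IsIterExt R M X) (e : X ≃ₗ[R] Y) : IsIterExt R M Y := by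
  induction h generalizing Y with
  | of_subsingleton =>
    have := e.symm.toEquiv.subsingleton
    exact of_subsingleton
  | of_quotient N _ q ih =>
    exact of_quotient (N.map e.toLinearMap) (ih (e.submoduleMap N))
      ((Quotient.equiv N _ e rfl).symm.trans q)

theorem surjective_of_ne_zero (hM : Schurian R M) (hX : IsIterExt R M X) {g : X →ₗ[R] M}
    (hg : g ≠ 0) : Surjective g := by
  induction hX with
  | of_subsingleton => exact absurd (LinearMap.ext fun x => by simp [Subsingleton.elim x 0]) hg
  | of_quotient N _ q ih =>
    by_cases hgN : g ∘ₗ N.subtype = 0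
    · have hN : N ≤ ker g := by rwa [← range_le_ker_iff, range_subtype] at hgN
      rw [← N.liftQ_mkQ g hN, coe_comp]
      exact (hM.bijective_liftQ q hN hg).2.comp N.mkQ_surjective
    · exact .of_comp (ih hgN)

theorem ker_of_codomain (hM : Schurian R M) (hX : IsIterExt R M X) (g : X →ₗ[R] M) :
    IsIterExt R M (ker g) := by
  induction hX with
  | of_subsingleton => exact of_subsingleton
  | of_quotient N hN q ih =>
    rcases eq_or_ne g 0 with rfl | hg
    · exact (of_quotient N hN q).of_equiv (LinearEquiv.ofTop _ ker_zero).symm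
    by_cases hgN : g ∘ₗ N.subtype = 0
    · have hNg : N ≤ ker g := by rwa [← range_le_ker_iff, range_subtype] at hgN
      have hker : N = ker g := by
        rw [← N.liftQ_mkQ g hNg, ker_comp, ker_eq_bot.mpr (hM.bijective_liftQ q hNg hg).1,
          comap_bot, ker_mkQ]
      exact hN.of_equiv (LinearEquiv.ofEq _ _ hker)
    · have hsup : N ⊔ ker g = ⊤ := by
        simpa [sup_comm] using
          ker_sup_range_eq_top_of_surjective (hN.surjective_of_ne_zero hM hgN)
      exact of_quotient (N.comap (ker g).subtype)
        ((ih (g ∘ₗ N.subtype)).of_equiv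
          ((LinearEquiv.ofEq _ _ (ker_comp _ _)).trans (comapSubtypeEquivComapSubtype _ _)))
        ((quotientComapSubtypeEquivOfSupEqTop hsup).trans q)

theorem comap (hM : Schurian R M) (hX : IsIterExt R M X) {N : Submodule R Y}
    (q : (Y ⧸ N) ≃ₗ[R] M) (f : X →ₗ[R] Y) : IsIterExt R M (N.comap f) :=
  (hX.ker_of_codomain hM (q.toLinearMap ∘ₗ N.mkQ ∘ₗ f)).of_equiv
    (LinearEquiv.ofEq _ _ (by simp [ker_comp]))

theorem ker (hM : Schurian R M) (hX : IsIterExt R M X) (hY : IsIterExt R M Y) (f : X →ₗ[R] Y) :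
    IsIterExt R M (ker f) := by
  induction hY generalizing X with
  | of_subsingleton =>
    exact hX.of_equiv (LinearEquiv.ofTop _ (ker_eq_top.mpr (Subsingleton.elim _ _))).symm
  | of_quotient N _ q ih =>
    have hf : ∀ x ∈ N.comap f, f x ∈ N := fun _ hx => hx
    exact (ih (hX.comap hM q f) (f.restrict hf)).of_equiv
      ((LinearEquiv.ofEq _ _ (ker_restrict hf)).trans (comapSubtypeEquivOfLe (comap_mono bot_le)))

theorem coker (hM : Schurian R M) (hX : IsIterExt R M X) (hY : IsIterExt R M Y)
    (f : X →ₗ[R] Y) : IsIterExt R M (Y ⧸ range f) := by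
  induction hY generalizing X with
  | of_subsingleton => exact of_subsingleton
  | of_quotient N _ q ih =>
    have hf : ∀ x ∈ N.comap f, f x ∈ N := fun _ hx => hx
    have hrange : range (f.restrict hf) = (range f).comap N.subtype := by
      rw [range_restrict, map_comap_eq, comap_inf, comap_subtype_self, inf_top_eq]
    have hN : IsIterExt R M (N ⧸ (range f).comap N.subtype) :=
      (ih (hX.comap hM q f) (f.restrict hf)).of_equiv (quotEquivOfEq _ _ hrange)
    set π := q.toLinearMap ∘ₗ N.mkQ
    have hπ : LinearMap.ker π = N := by simp [π, ker_comp]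
    by_cases hπf : π ∘ₗ f = 0
    · have hle : range f ≤ N := hπ ▸ range_le_ker_iff.mpr hπf
      exact of_quotient (map (range f).mkQ N) (hN.of_equiv (quotientComapSubtypeEquivMap N _))
        ((quotientQuotientEquivQuotient _ N hle).trans q)
    · have hsup : range f ⊔ N = ⊤ := by
        rw [sup_comm, ← hπ]
        exact ker_sup_range_eq_top_of_surjective (hX.surjective_of_ne_zero hM hπf)
      exact hN.of_equiv (quotientComapSubtypeEquivOfSupEqTop hsup)

end IsIterExt

theorem isFiltered_of_subsingleton [Subsingleton X] : IsFiltered R M X :=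
  ⟨0, fun _ => ⊥, monotone_const, rfl, Subsingleton.elim _ _, fun i => i.elim0⟩

theorem IsFiltered.of_quotient {N : Submodule R X} (hN : IsFiltered R M N)
    (q : (X ⧸ N) ≃ₗ[R] M) : IsFiltered R M X := by
  obtain ⟨s, G, hG, hG0, hGtop, hGsub⟩ := hN
  let F : Fin (s + 2) → Submodule R X :=
    Fin.snoc (α := fun _ => Submodule R X) (fun i => (G i).map N.subtype) ⊤
  refine ⟨s + 1, F, ?_, ?_, ?_, fun i => ?_⟩
  · simpa [F, Fin.insertNth_last'] using
      Fin.insertNth_last_monotone (fun i j hij => map_mono (hG hij)) ⊤ le_top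
  · show F (Fin.castSucc 0) = ⊥
    simp [F, hG0]
  · simp [F]
  · induction i using Fin.lastCases with
    | last =>
      rw [show F (Fin.last s).succ = ⊤ by simp [F],
        show F (Fin.last s).castSucc = N by simp [F, hGtop]]
      exact ⟨(quotientComapSubtypeEquivOfSupEqTop (sup_top_eq _)).trans q⟩
    | cast j =>
      obtain ⟨e⟩ := hGsub j
      have e' := quotientComapSubtypeEquivOfLE (map_subtype_le N (G j.succ))
        ((G j.castSucc).map N.subtype)
      rw [comap_map_eq_of_injective N.injective_subtype,
        comap_map_eq_of_injective N.injective_subtype] at e'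
      rw [show F j.castSucc.succ = (G j.succ).map N.subtype by
          rw [Fin.succ_castSucc]; exact Fin.snoc_castSucc ..,
        show F j.castSucc.castSucc = (G j.castSucc).map N.subtype by simp [F]]
      exact ⟨e'.symm.trans e⟩

theorem IsIterExt.isFiltered (h : IsIterExt R M X) : IsFiltered R M X := by
  induction h with
  | of_subsingleton => exact isFiltered_of_subsingleton
  | of_quotient _ _ q ih => exact ih.of_quotient q

theorem IsFiltered.isIterExt (h : IsFiltered R M X) : IsIterExt R M X := by
  obtain ⟨k, F, hF, hF0, hFtop, hFsub⟩ := h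
  induction k generalizing X with
  | zero =>
    rw [show Fin.last 0 = 0 from rfl, hF0] at hFtop
    have := (Submodule.subsingleton_iff R).mp (subsingleton_iff_bot_eq_top.mp hFtop)
    exact .of_subsingleton
  | succ k ih =>
    let N := F (Fin.last k).castSucc
    obtain ⟨q⟩ := hFsub (Fin.last k)
    refine .of_quotient N (ih (fun i => (F i.castSucc).comap N.subtype)
      (fun i j hij => comap_mono (hF (Fin.castSucc_le_castSucc_iff.mpr hij))) ?_
      (comap_subtype_self _) fun i => ?_) ?_
    · simp [hF0]
    · obtain ⟨e⟩ := hFsub i.castSucc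
      rw [Fin.succ_castSucc] at e
      have hle : F i.succ.castSucc ≤ N := hF (Fin.castSucc_le_castSucc_iff.mpr (Fin.le_last _))
      exact ⟨(quotientComapSubtypeEquivOfLE hle _).trans e⟩
    · have hsup : N ⊔ F (Fin.last k).succ = ⊤ := by rw [Fin.succ_last, hFtop, sup_top_eq]
      exact (quotientComapSubtypeEquivOfSupEqTop hsup).symm.trans q

end

theorem stmt7_general (Λ : Type) [Ring Λ]
    (M : Type) [AddCommGroup M] [Module Λ M]
    (hM : Schurian Λ M)
    (X Y : Type) [AddCommGroup X] [Module Λ X] [AddCommGroup Y] [Module Λ Y]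
    (hX : IsFiltered Λ M X) (hY : IsFiltered Λ M Y) (f : X →ₗ[Λ] Y) :
    IsFiltered Λ M ↥(LinearMap.ker f) ∧ IsFiltered Λ M (Y ⧸ LinearMap.range f) :=
  ⟨(hX.isIterExt.ker hM hY.isIterExt f).isFiltered,
    (hX.isIterExt.coker hM hY.isIterExt f).isFiltered⟩

/-- If `M` is a Schurian `Λ`-module, then `E(M)` (modules filtered by copies
of `M`) is an abelian subcategory: it is closed under kernels and cokernels of its
morphisms. -/
theorem stmt7 (Λ : Type) [Ring Λ]
    (M : Type) [AddCommGroup M] [Module Λ M] [IsNoetherian Λ M] [IsArtinian Λ M]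
    (hM : Schurian Λ M)
    (X Y : Type) [AddCommGroup X] [Module Λ X] [AddCommGroup Y] [Module Λ Y]
    (hX : IsFiltered Λ M X) (hY : IsFiltered Λ M Y) (f : X →ₗ[Λ] Y) :
    IsFiltered Λ M ↥(LinearMap.ker f) ∧ IsFiltered Λ M (Y ⧸ LinearMap.range f) :=
  stmt7_general Λ M hM X Y hX hY f
end
end

section
/- If M is the unique indecomposable object (up to isomorphism) of a wide subcategory W of mod-Λ, then M is Schurian and W = E(M), the category of iterated self-extensions of M. -/
open scoped BigOperators

noncomputable section

/-- A module is indecomposable: it is nonzero and admits no nontrivial direct sum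
decomposition. -/
def Indecomposable' (Λ : Type) [Ring Λ] (X : Type) [AddCommGroup X] [Module Λ X] : Prop :=
  (∃ y : X, y ≠ 0) ∧ ∀ A B : Submodule Λ X, IsCompl A B → A = ⊥ ∨ B = ⊥

/-!
Every nonzero object `N` of `W = P` contains a copy of `M`: splitting off direct summands, which
stay in `W`, must stop (`N` is artinian) at an indecomposable submodule, and that is isomorphic to `M`.
If `f : M → M` is nonzero, its image is a nonzero object of `W` (the kernel of the cokernel of `f`),
so `M` embeds into `im f ⊆ M`; as `M` is artinian this forces `im f = M`, and then `f` is bijective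
since `M` is noetherian. Repeatedly splitting off a copy of `M` from quotients of an object of `W`
(noetherian induction) produces an `M`-filtration, and closure under extensions gives the converse.
-/

section

variable {Λ : Type} [Ring Λ]

section Filtration

variable {M : Type} [AddCommGroup M] [Module Λ M]

def subquotientComapEquiv {X Y : Type} [AddCommGroup X] [Module Λ X] [AddCommGroup Y]
    [Module Λ Y] (q : X →ₗ[Λ] Y) (hq : Function.Surjective q) (A B : Submodule Λ Y) :
    (↥(B.comap q) ⧸ (A.comap q).comap (B.comap q).subtype) ≃ₗ[Λ] (↥B ⧸ A.comap B.subtype) :=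
  let g := (A.comap B.subtype).mkQ ∘ₗ q.restrict (p := B.comap q) (q := B) fun _ hx => hx
  have hsurj : Function.Surjective g := by
    refine (Submodule.mkQ_surjective _).comp ?_
    rintro ⟨b, hb⟩
    obtain ⟨x, rfl⟩ := hq b
    exact ⟨⟨x, hb⟩, rfl⟩
  have hker : LinearMap.ker g = (A.comap q).comap (B.comap q).subtype := by
    ext x
    simp [g, Submodule.Quotient.mk_eq_zero, LinearMap.restrict_apply]
  (Submodule.quotEquivOfEq _ _ hker.symm).trans (g.quotKerEquivOfSurjective hsurj)

theorem IsFiltered.of_linearEquiv {X Y : Type} [AddCommGroup X] [Module Λ X] [AddCommGroup Y]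
    [Module Λ Y] (hY : IsFiltered Λ M Y) (e : X ≃ₗ[Λ] Y) : IsFiltered Λ M X := by
  obtain ⟨k, F, hmono, h0, hlast, hsub⟩ := hY
  refine ⟨k, fun i => (F i).comap e.toLinearMap, fun i j hij => Submodule.comap_mono (hmono hij),
    ?_, ?_, fun i => ⟨(subquotientComapEquiv _ e.surjective _ _).trans (hsub i).some⟩⟩
  · simp only [h0, Submodule.comap_bot, LinearEquiv.ker]
  · simp only [hlast, Submodule.comap_top]

theorem IsFiltered.of_subsingleton {Z : Type} [AddCommGroup Z] [Module Λ Z] [Subsingleton Z] :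
    IsFiltered Λ M Z :=
  ⟨0, fun _ => ⊥, monotone_const, rfl, Subsingleton.elim _ _, fun i => i.elim0⟩

theorem IsFiltered.of_submodule {X : Type} [AddCommGroup X] [Module Λ X] {S : Submodule Λ X}
    (e : S ≃ₗ[Λ] M) (hQ : IsFiltered Λ M (X ⧸ S)) : IsFiltered Λ M X := by
  obtain ⟨k, F, hmono, h0, hlast, hsub⟩ := hQ
  refine ⟨k + 1, Fin.cases ⊥ fun i => (F i).comap S.mkQ, ?_, by simp, ?_, ?_⟩
  · refine Fin.monotone_iff_le_succ.mpr fun i => ?_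
    induction i using Fin.cases with
    | zero => exact bot_le
    | succ i => exact Submodule.comap_mono (hmono (Fin.castSucc_le_succ i))
  · simp [← Fin.succ_last, hlast]
  · intro i
    induction i using Fin.cases with
    | zero =>
      simp only [Fin.castSucc_zero, Fin.cases_succ, Fin.cases_zero]
      have hbot : (⊥ : Submodule Λ X).comap ((F 0).comap S.mkQ).subtype = ⊥ := by
        rw [Submodule.comap_bot, Submodule.ker_subtype]
      exact ⟨(Submodule.quotEquivOfEqBot _ hbot).trans
        ((LinearEquiv.ofEq _ _ (by rw [h0, Submodule.comap_bot, Submodule.ker_mkQ])).trans e)⟩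
    | succ i =>
      simp only [← Fin.succ_castSucc, Fin.cases_succ]
      exact ⟨(subquotientComapEquiv _ S.mkQ_surjective _ _).trans (hsub i).some⟩

end Filtration

section Closure

variable (P : (N : Type) → [AddCommGroup N] → [Module Λ N] → Prop)

def ClosedUnderIso : Prop :=
  ∀ (N N' : Type) [AddCommGroup N] [Module Λ N] [AddCommGroup N'] [Module Λ N'],
    (N ≃ₗ[Λ] N') → P N → P N'

def ClosedUnderSummands : Prop :=
  ∀ (A B : Type) [AddCommGroup A] [Module Λ A] [AddCommGroup B] [Module Λ B], P (A × B) → P A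

def ClosedUnderExtensions : Prop :=
  ∀ (E : Type) [AddCommGroup E] [Module Λ E] (A : Submodule Λ E), P ↥A → P (E ⧸ A) → P E

def ClosedUnderKernels : Prop :=
  ∀ (A B : Type) [AddCommGroup A] [Module Λ A] [AddCommGroup B] [Module Λ B]
    (f : A →ₗ[Λ] B), P A → P B → P ↥(LinearMap.ker f)

def ClosedUnderCokernels : Prop :=
  ∀ (A B : Type) [AddCommGroup A] [Module Λ A] [AddCommGroup B] [Module Λ B]
    (f : A →ₗ[Λ] B), P A → P B → P (B ⧸ LinearMap.range f)

variable {P}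
theorem range_mem_of_mem (hiso : ClosedUnderIso P) (hker : ClosedUnderKernels P)
    (hcoker : ClosedUnderCokernels P) {A B : Type} [AddCommGroup A] [Module Λ A]
    [AddCommGroup B] [Module Λ B] (hA : P A) (hB : P B) (f : A →ₗ[Λ] B) :
    P ↥(LinearMap.range f) :=
  hiso _ _ (LinearEquiv.ofEq _ _ (Submodule.ker_mkQ _)) (hker _ _ _ hB (hcoker _ _ f hA hB))

theorem mem_of_subsingleton (hiso : ClosedUnderIso P) (hker : ClosedUnderKernels P)
    {M : Type} [AddCommGroup M] [Module Λ M] (hM : P M)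
    (Z : Type) [AddCommGroup Z] [Module Λ Z] [Subsingleton Z] : P Z := by
  have : Subsingleton ↥(LinearMap.ker (LinearMap.id : M →ₗ[Λ] M)) := by
    rw [LinearMap.ker_id]; infer_instance
  exact hiso _ _ (LinearEquiv.ofSubsingleton _ _) (hker M M LinearMap.id hM hM)

theorem exists_lt_mem_of_not_indecomposable (hiso : ClosedUnderIso P)
    (hsum : ClosedUnderSummands P) {N : Type} [AddCommGroup N] [Module Λ N]
    {S : Submodule Λ N} (hS : S ≠ ⊥) (hPS : P S) (hdec : ¬ Indecomposable' Λ S) :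
    ∃ S' < S, S' ≠ ⊥ ∧ P S' := by
  obtain ⟨x, hx, hx0⟩ := (Submodule.ne_bot_iff S).mp hS
  obtain ⟨A, B, hAB, hA, hB⟩ : ∃ A B : Submodule Λ S, IsCompl A B ∧ A ≠ ⊥ ∧ B ≠ ⊥ := by
    unfold Indecomposable' at hdec
    push Not at hdec
    exact hdec ⟨⟨x, hx⟩, fun h => hx0 (congrArg Subtype.val h)⟩
  have hPA : P A := hsum A B (hiso _ _ (Submodule.prodEquivOfIsCompl A B hAB).symm hPS)
  refine ⟨A.map S.subtype, lt_of_le_of_ne (Submodule.map_subtype_le S A) fun heq => hB ?_, ?_,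
    hiso _ _ (Submodule.equivMapOfInjective _ S.injective_subtype A) hPA⟩
  · have hA_top : A = ⊤ := Submodule.map_injective_of_injective S.injective_subtype
      (heq.trans (Submodule.map_subtype_top S).symm)
    exact hAB.symm.disjoint.eq_bot_of_le (hA_top ▸ le_top)
  · rwa [Ne, ← Submodule.map_bot S.subtype,
      (Submodule.map_injective_of_injective S.injective_subtype).eq_iff]

theorem exists_indecomposable_submodule (hiso : ClosedUnderIso P)
    (hsum : ClosedUnderSummands P) {N : Type} [AddCommGroup N] [Module Λ N] [IsArtinian Λ N]
    (hN : P N) (hN0 : ∃ y : N, y ≠ 0) :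
    ∃ T : Submodule Λ N, P T ∧ Indecomposable' Λ T := by
  suffices h : ∀ S : Submodule Λ N, S ≠ ⊥ → P S → ∃ T : Submodule Λ N, P T ∧ Indecomposable' Λ T by
    obtain ⟨y, hy⟩ := hN0
    exact h ⊤ ((Submodule.ne_bot_iff _).mpr ⟨y, trivial, hy⟩) (hiso _ _ Submodule.topEquiv.symm hN)
  intro S
  induction S using IsArtinian.induction with
  | _ S ih =>
    intro hS hPS
    by_cases hind : Indecomposable' Λ S
    · exact ⟨S, hPS, hind⟩
    · obtain ⟨S', hlt, hS', hPS'⟩ := exists_lt_mem_of_not_indecomposable hiso hsum hS hPS hind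
      exact ih S' hlt hS' hPS'

theorem Submodule.eq_top_of_injective {M : Type} [AddCommGroup M] [Module Λ M] [IsArtinian Λ M]
    (N : Submodule Λ M) (g : M →ₗ[Λ] N) (hg : Function.Injective g) : N = ⊤ := by
  have hsurj := IsArtinian.surjective_of_injective_endomorphism (N.subtype ∘ₗ g)
    (N.injective_subtype.comp hg)
  refine eq_top_iff.mpr fun x _ => ?_
  obtain ⟨y, rfl⟩ := hsurj x
  exact (g y).2

theorem schurian_of_forall_injective (hiso : ClosedUnderIso P) (hker : ClosedUnderKernels P)
    (hcoker : ClosedUnderCokernels P) {M : Type} [AddCommGroup M] [Module Λ M]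
    [IsArtinian Λ M] [IsNoetherian Λ M] (hM : P M) (hM0 : ∃ y : M, y ≠ 0)
    (hemb : ∀ (N : Type) [AddCommGroup N] [Module Λ N], P N → (∃ y : N, y ≠ 0) →
      ∃ g : M →ₗ[Λ] N, Function.Injective g) :
    Schurian Λ M := by
  refine ⟨hM0, fun f hf => ?_⟩
  have hrange0 : ∃ y : LinearMap.range f, y ≠ 0 := by
    obtain ⟨x, hx⟩ := DFunLike.ne_iff.mp hf
    exact ⟨⟨f x, LinearMap.mem_range_self f x⟩, fun h => hx (congrArg Subtype.val h)⟩
  obtain ⟨g, hg⟩ := hemb _ (range_mem_of_mem hiso hker hcoker hM hM f) hrange0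
  have hsurj : Function.Surjective f :=
    LinearMap.range_eq_top.mp ((LinearMap.range f).eq_top_of_injective g hg)
  exact ⟨IsNoetherian.injective_of_surjective_endomorphism f hsurj, hsurj⟩

theorem mem_of_isFiltered (hiso : ClosedUnderIso P) (hext : ClosedUnderExtensions P)
    (hker : ClosedUnderKernels P) {M : Type} [AddCommGroup M] [Module Λ M] (hM : P M)
    {X : Type} [AddCommGroup X] [Module Λ X] (hX : IsFiltered Λ M X) : P X := by
  obtain ⟨k, F, hmono, h0, hlast, hsub⟩ := hX
  have hF : ∀ i, P (F i) := by
    intro i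
    induction i using Fin.induction with
    | zero => rw [h0]; exact mem_of_subsingleton hiso hker hM _
    | succ i ih =>
      exact hext _ _
        (hiso _ _ (Submodule.comapSubtypeEquivOfLe (hmono (Fin.castSucc_le_succ i))).symm ih)
        (hiso _ _ (hsub i).some.symm hM)
  exact hiso _ _ Submodule.topEquiv (hlast ▸ hF (Fin.last k))

theorem isFiltered_of_mem (hiso : ClosedUnderIso P) (hcoker : ClosedUnderCokernels P)
    {M : Type} [AddCommGroup M] [Module Λ M] (hM : P M) (hM0 : ∃ y : M, y ≠ 0)
    (hemb : ∀ (N : Type) [AddCommGroup N] [Module Λ N], P N → (∃ y : N, y ≠ 0) →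
      ∃ g : M →ₗ[Λ] N, Function.Injective g)
    {X : Type} [AddCommGroup X] [Module Λ X] [IsNoetherian Λ X] (hX : P X) :
    IsFiltered Λ M X := by
  have eX : X ≃ₗ[Λ] X ⧸ (⊥ : Submodule Λ X) := (Submodule.quotEquivOfEqBot ⊥ rfl).symm
  suffices h : ∀ S : Submodule Λ X, P (X ⧸ S) → IsFiltered Λ M (X ⧸ S) from
    (h ⊥ (hiso _ _ eX hX)).of_linearEquiv eX
  intro S
  induction S using IsNoetherian.induction with
  | _ S ih =>
    intro hS
    rcases subsingleton_or_nontrivial (X ⧸ S) with _ | _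
    · exact IsFiltered.of_subsingleton
    obtain ⟨g, hg⟩ := hemb _ hS (exists_ne 0)
    have hrange : LinearMap.range g ≠ ⊥ := by
      obtain ⟨y, hy⟩ := hM0
      rw [Ne, LinearMap.range_eq_bot]
      exact fun h => hy (hg (by rw [h, LinearMap.zero_apply, map_zero]))
    set S' := (LinearMap.range g).comap S.mkQ
    have hle : S ≤ S' := (Submodule.ker_mkQ S).symm.le.trans (LinearMap.ker_le_comap _)
    have hmap : S'.map S.mkQ = LinearMap.range g :=
      Submodule.map_comap_eq_of_surjective S.mkQ_surjective _
    have hlt : S < S' := lt_of_le_of_ne hle fun h => hrange <| by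
      rw [← hmap, ← h, Submodule.mkQ_map_self]
    have e : ((X ⧸ S) ⧸ LinearMap.range g) ≃ₗ[Λ] X ⧸ S' :=
      (Submodule.quotEquivOfEq _ _ hmap.symm).trans
        (Submodule.quotientQuotientEquivQuotient S S' hle)
    have hQ : IsFiltered Λ M (X ⧸ S') := ih S' hlt (hiso _ _ e (hcoker _ _ g hM hS))
    exact (hQ.of_linearEquiv e).of_submodule (LinearEquiv.ofInjective g hg).symm

end Closure

end

/-- If `M` is the unique indecomposable object (up to isomorphism) of a wide
subcategory `W` of `mod-Λ` (here a class `P` of finite-length modules, closed under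
isomorphism, summands, extensions, kernels and cokernels), then `M` is Schurian and
`W = E(M)`, the category of iterated self-extensions of `M`. -/
theorem stmt8 (Λ : Type) [Ring Λ]
    (P : (N : Type) → [AddCommGroup N] → [Module Λ N] → Prop)
    (hfin : ∀ (N : Type) [AddCommGroup N] [Module Λ N],
      P N → IsNoetherian Λ N ∧ IsArtinian Λ N)
    (hisoP : ∀ (N N' : Type) [AddCommGroup N] [Module Λ N] [AddCommGroup N'] [Module Λ N'],
      (N ≃ₗ[Λ] N') → P N → P N')
    (hsum : ∀ (A B : Type) [AddCommGroup A] [Module Λ A] [AddCommGroup B] [Module Λ B],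
      P (A × B) → P A)
    (hext : ∀ (E : Type) [AddCommGroup E] [Module Λ E] (A : Submodule Λ E),
      P ↥A → P (E ⧸ A) → P E)
    (hker : ∀ (A B : Type) [AddCommGroup A] [Module Λ A] [AddCommGroup B] [Module Λ B]
      (f : A →ₗ[Λ] B), P A → P B → P ↥(LinearMap.ker f))
    (hcoker : ∀ (A B : Type) [AddCommGroup A] [Module Λ A] [AddCommGroup B] [Module Λ B]
      (f : A →ₗ[Λ] B), P A → P B → P (B ⧸ LinearMap.range f))
    (M : Type) [AddCommGroup M] [Module Λ M]
    (hMP : P M) (hMind : Indecomposable' Λ M)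
    (huniq : ∀ (N : Type) [AddCommGroup N] [Module Λ N],
      P N → Indecomposable' Λ N → Nonempty (N ≃ₗ[Λ] M)) :
    Schurian Λ M ∧
      ∀ (X : Type) [AddCommGroup X] [Module Λ X], (P X ↔ IsFiltered Λ M X) := by
  have hemb : ∀ (N : Type) [AddCommGroup N] [Module Λ N], P N → (∃ y : N, y ≠ 0) →
      ∃ g : M →ₗ[Λ] N, Function.Injective g := by
    intro N _ _ hN hN0
    have := (hfin N hN).2
    obtain ⟨T, hT, hTind⟩ := exists_indecomposable_submodule hisoP hsum hN hN0
    obtain ⟨e⟩ := huniq T hT hTind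
    exact ⟨T.subtype ∘ₗ e.symm.toLinearMap, T.injective_subtype.comp e.symm.injective⟩
  obtain ⟨_, _⟩ := hfin M hMP
  refine ⟨schurian_of_forall_injective hisoP hker hcoker hMP hMind.1 hemb,
    fun X _ _ => ⟨fun hX => ?_, mem_of_isFiltered hisoP hext hker hMP⟩⟩
  have := (hfin X hX).1
  exact isFiltered_of_mem hisoP hcoker hMP hMind.1 hemb hX
end
end

section
/- Let Z_• be a green nonlinear stability function for Λ. Then every Λ-module M admits a unique Harder–Narasimhan filtration: there exist unique t₁ < t₂ < ... < t_m and a unique filtration 0 = M₀ ⊊ M₁ ⊊ ... ⊊ M_m = M such that M_k/M_{k−1} is Z_{t_k}-semistable with μ_{t_k}(M_k/M_{k−1}) = t_k for all k. Moreover t₁ = t₁(M), the minimum over nonzero submodules M' ⊆ M of the smallest t with μ_t(M')=t. -/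
open scoped BigOperators

noncomputable section

/-- `(F, ts)` is a Harder–Narasimhan filtration of `X` of length `m`: a strict filtration
`0 = F 0 ⊊ F 1 ⊊ ... ⊊ F m = X` together with strictly increasing times `t₁ < ... < t_m`
such that the `k`-th subquotient is `Z_{t_k}`-semistable with slope `μ_{t_k} = t_k`. -/
def IsHNFilt {Λ : Type} [Ring Λ] {n : ℕ}
    (d : (N : Type) → [AddCommGroup N] → [Module Λ N] → Fin n → ℕ)
    (a b : ℝ → Fin n → ℝ)
    (X : Type) [AddCommGroup X] [Module Λ X]
    (m : ℕ) (F : Fin (m + 1) → Submodule Λ X) (ts : Fin m → ℝ) : Prop :=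
  StrictMono F ∧ F 0 = ⊥ ∧ F (Fin.last m) = ⊤ ∧ StrictMono ts ∧
    ∀ i : Fin m,
      Semistable d a b (ts i)
        (↥(F i.succ) ⧸ Submodule.comap (F i.succ).subtype (F i.castSucc)) ∧
      muZ a b (ts i)
        (d (↥(F i.succ) ⧸ Submodule.comap (F i.succ).subtype (F i.castSucc))) = ts i

/-!
Greenness says that at a semistable pair `(N, t)` the function `t ↦ μ_t(N) - t`, or rather its
additive rescaling `slopeGap`, crosses zero downwards. Hence "every nonzero submodule has
`μ_τ > τ`" propagates from any time to all earlier times: at the last time it fails, some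
submodule is a semistable pair whose slope would cross the diagonal the wrong way. Consequently
`t₁(M)` is the first time at which a submodule reaches `μ_t = t`, the largest such submodule `M₁`
is semistable, and all slopes of `M / M₁` stay above the diagonal up to `t₁(M)`. Induction on
`M / M₁` gives existence; conversely the first step of every HN filtration is forced to be
`(t₁(M), M₁)`, which gives uniqueness.
-/

open Topology Submodule

namespace NonlinearStability

variable {n : ℕ}

lemma dprod_add (x : Fin n → ℝ) (v w : Fin n → ℕ) :
    dprod x (v + w) = dprod x v + dprod x w := by
  simp only [dprod, Pi.add_apply, Nat.cast_add, mul_add, Finset.sum_add_distrib]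

lemma dprod_zero (x : Fin n → ℝ) : dprod x 0 = 0 := by
  simp [dprod]

lemma dprod_pos {x : Fin n → ℝ} (hx : ∀ i, 0 < x i) {v : Fin n → ℕ} (hv : v ≠ 0) :
    0 < dprod x v := by
  obtain ⟨i, hi⟩ := Function.ne_iff.1 hv
  exact Finset.sum_pos' (fun j _ => mul_nonneg (hx j).le (Nat.cast_nonneg _))
    ⟨i, Finset.mem_univ i, mul_pos (hx i) (Nat.cast_pos.2 (Nat.pos_of_ne_zero hi))⟩

lemma differentiable_dprod {x : ℝ → Fin n → ℝ}
    (hx : ∀ i, Differentiable ℝ fun t => x t i) (v : Fin n → ℕ) :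
    Differentiable ℝ fun t => dprod (x t) v := by
  unfold dprod
  fun_prop

lemma eventually_slope_neg_of_deriv_neg {f : ℝ → ℝ} {s : ℝ} (hd : deriv f s < 0) :
    ∀ᶠ σ in 𝓝[≠] s, slope f s σ < 0 :=
  (hasDerivAt_iff_tendsto_slope.1 (differentiableAt_of_deriv_ne_zero hd.ne).hasDerivAt
    ).eventually_lt_const hd

lemma eq_slope_mul_of_eq_zero {f : ℝ → ℝ} {s σ : ℝ} (h0 : f s = 0) (hσ : σ ≠ s) :
    f σ = slope f s σ * (σ - s) := by
  rw [slope_def_field, h0, sub_zero, div_mul_cancel₀ _ (sub_ne_zero.2 hσ)]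

lemma eventually_neg_nhdsGT_of_deriv_neg {f : ℝ → ℝ} {s : ℝ} (h0 : f s = 0)
    (hd : deriv f s < 0) : ∀ᶠ σ in 𝓝[>] s, f σ < 0 := by
  filter_upwards [(eventually_slope_neg_of_deriv_neg hd).filter_mono
    (nhdsWithin_mono s fun _ h => ne_of_gt h), self_mem_nhdsWithin] with σ hslope (hσ : s < σ)
  rw [eq_slope_mul_of_eq_zero h0 hσ.ne']
  exact mul_neg_of_neg_of_pos hslope (sub_pos.2 hσ)

lemma eventually_pos_nhdsLT_of_deriv_neg {f : ℝ → ℝ} {s : ℝ} (h0 : f s = 0)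
    (hd : deriv f s < 0) : ∀ᶠ σ in 𝓝[<] s, 0 < f σ := by
  filter_upwards [(eventually_slope_neg_of_deriv_neg hd).filter_mono
    (nhdsWithin_mono s fun _ h => ne_of_lt h), self_mem_nhdsWithin] with σ hslope (hσ : σ < s)
  rw [eq_slope_mul_of_eq_zero h0 hσ.ne]
  exact mul_pos_of_neg_of_neg hslope (sub_neg.2 hσ)

structure IsNonlinearStability (a b : ℝ → Fin n → ℝ) : Prop where
  pos : ∀ t i, 0 < b t i
  differentiable_a : ∀ i, Differentiable ℝ fun t => a t i
  differentiable_b : ∀ i, Differentiable ℝ fun t => b t i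
  const_atBot : ∃ T, ∀ t ≤ T, a t = a T ∧ b t = b T
  const_atTop : ∃ T, ∀ t, T ≤ t → a t = a T ∧ b t = b T

/-- `slopeGap a b v t = (μ_t(v) - t) (b_t · v)` (see `slopeGap_eq_mul`); unlike `μ_t(v) - t`
it is additive in `v`. -/
def slopeGap (a b : ℝ → Fin n → ℝ) (v : Fin n → ℕ) (t : ℝ) : ℝ :=
  dprod (a t) v - t * dprod (b t) v

variable {a b : ℝ → Fin n → ℝ}

lemma slopeGap_add (v w : Fin n → ℕ) (t : ℝ) :
    slopeGap a b (v + w) t = slopeGap a b v t + slopeGap a b w t := by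
  simp only [slopeGap, dprod_add]
  ring

lemma slopeGap_zero (t : ℝ) : slopeGap a b 0 t = 0 := by
  simp [slopeGap, dprod_zero]

namespace IsNonlinearStability

variable {v : Fin n → ℕ}

lemma slopeGap_eq_mul (hZ : IsNonlinearStability a b) (hv : v ≠ 0) (t : ℝ) :
    slopeGap a b v t = (muZ a b t v - t) * dprod (b t) v := by
  rw [slopeGap, muZ, sub_mul, div_mul_cancel₀ _ (dprod_pos (hZ.pos t) hv).ne']

lemma muZ_eq_iff (hZ : IsNonlinearStability a b) (hv : v ≠ 0) (t : ℝ) :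
    muZ a b t v = t ↔ slopeGap a b v t = 0 := by
  rw [hZ.slopeGap_eq_mul hv, mul_eq_zero, sub_eq_zero, or_iff_left (dprod_pos (hZ.pos t) hv).ne']

lemma le_muZ_iff (hZ : IsNonlinearStability a b) (hv : v ≠ 0) (t : ℝ) :
    t ≤ muZ a b t v ↔ 0 ≤ slopeGap a b v t := by
  rw [hZ.slopeGap_eq_mul hv, mul_nonneg_iff_of_pos_right (dprod_pos (hZ.pos t) hv), sub_nonneg]

lemma differentiable_slopeGap (hZ : IsNonlinearStability a b) (v : Fin n → ℕ) :
    Differentiable ℝ (slopeGap a b v) :=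
  (differentiable_dprod hZ.differentiable_a v).sub
    (differentiable_id.mul (differentiable_dprod hZ.differentiable_b v))

lemma continuous_slopeGap (hZ : IsNonlinearStability a b) (v : Fin n → ℕ) :
    Continuous (slopeGap a b v) :=
  (hZ.differentiable_slopeGap v).continuous

/-- At a zero of `slopeGap`, `slopeGap' = (μ' - 1) (b · v)`: this is where greenness enters. -/
lemma deriv_slopeGap_neg (hZ : IsNonlinearStability a b) (hv : v ≠ 0) {t : ℝ}
    (h0 : slopeGap a b v t = 0) (hμ : deriv (fun s => muZ a b s v) t < 1) :
    deriv (slopeGap a b v) t < 0 := by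
  have hB := fun s => dprod_pos (hZ.pos s) hv
  have hμd : DifferentiableAt ℝ (fun s => muZ a b s v) t :=
    (differentiable_dprod hZ.differentiable_a v t).div
      (differentiable_dprod hZ.differentiable_b v t) (hB t).ne'
  have hfix : muZ a b t v - t = 0 := by
    rwa [hZ.slopeGap_eq_mul hv, mul_eq_zero, or_iff_left (hB t).ne'] at h0
  have hderiv : HasDerivAt (slopeGap a b v)
      ((deriv (fun s => muZ a b s v) t - 1) * dprod (b t) v +
        (muZ a b t v - t) * deriv (fun s => dprod (b s) v) t) t := by
    rw [show slopeGap a b v = fun s => (muZ a b s v - s) * dprod (b s) v from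
      funext (hZ.slopeGap_eq_mul hv)]
    exact (hμd.hasDerivAt.sub (hasDerivAt_id' t)).mul
      (differentiable_dprod hZ.differentiable_b v t).hasDerivAt
  rw [hderiv.deriv, hfix, zero_mul, add_zero]
  exact mul_neg_of_neg_of_pos (by linarith) (hB t)

lemma eventually_slopeGap_pos (hZ : IsNonlinearStability a b) (hv : v ≠ 0) :
    ∀ᶠ s in Filter.atBot, 0 < slopeGap a b v s := by
  obtain ⟨T, hT⟩ := hZ.const_atBot
  have hB := dprod_pos (hZ.pos T) hv
  refine Filter.eventually_atBot.2 ⟨min T (dprod (a T) v / dprod (b T) v - 1), fun s hs => ?_⟩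
  obtain ⟨ha, hb⟩ := hT s (hs.trans (min_le_left _ _))
  have hs' : s * dprod (b T) v < dprod (a T) v :=
    (lt_div_iff₀ hB).1 (by linarith [min_le_right T (dprod (a T) v / dprod (b T) v - 1)])
  rw [slopeGap, ha, hb]
  linarith

lemma eventually_slopeGap_neg (hZ : IsNonlinearStability a b) (hv : v ≠ 0) :
    ∀ᶠ s in Filter.atTop, slopeGap a b v s < 0 := by
  obtain ⟨T, hT⟩ := hZ.const_atTop
  have hB := dprod_pos (hZ.pos T) hv
  refine Filter.eventually_atTop.2 ⟨max T (dprod (a T) v / dprod (b T) v + 1), fun s hs => ?_⟩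
  obtain ⟨ha, hb⟩ := hT s ((le_max_left _ _).trans hs)
  have hs' : dprod (a T) v < s * dprod (b T) v :=
    (div_lt_iff₀ hB).1 (by linarith [le_max_right T (dprod (a T) v / dprod (b T) v + 1)])
  rw [slopeGap, ha, hb]
  linarith

lemma isLeast_tzero (hZ : IsNonlinearStability a b) (hv : v ≠ 0) :
    IsLeast {t | slopeGap a b v t = 0} (tzero a b v) := by
  obtain ⟨s₀, hs₀⟩ := Filter.eventually_atBot.1 (hZ.eventually_slopeGap_pos hv)
  obtain ⟨s₁, hs₁⟩ := Filter.eventually_atTop.1 (hZ.eventually_slopeGap_neg hv)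
  have hne : {t | slopeGap a b v t = 0}.Nonempty := by
    obtain ⟨z, -, hz⟩ := intermediate_value_Icc' (min_le_max (a := s₀) (b := s₁))
      (hZ.continuous_slopeGap v).continuousOn
      ⟨(hs₁ _ (le_max_right _ _)).le, (hs₀ _ (min_le_left _ _)).le⟩
    exact ⟨z, hz⟩
  have hbdd : BddBelow {t | slopeGap a b v t = 0} :=
    ⟨s₀, fun t ht => not_lt.1 fun hlt => (hs₀ t hlt.le).ne' ht⟩
  rw [tzero, show {t | muZ a b t v = t} = {t | slopeGap a b v t = 0} from
    Set.ext fun t => hZ.muZ_eq_iff hv t]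
  exact (isClosed_eq (hZ.continuous_slopeGap v) continuous_const).isLeast_csInf hne hbdd

lemma slopeGap_pos_of_lt_tzero (hZ : IsNonlinearStability a b) (hv : v ≠ 0) {t : ℝ}
    (ht : t < tzero a b v) : 0 < slopeGap a b v t := by
  by_contra! hle
  obtain ⟨s₀, hs₀⟩ := Filter.eventually_atBot.1 (hZ.eventually_slopeGap_pos hv)
  obtain ⟨z, hz, hz0⟩ := intermediate_value_Icc' (min_le_right s₀ t)
    (hZ.continuous_slopeGap v).continuousOn ⟨hle, (hs₀ _ (min_le_left _ _)).le⟩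
  linarith [(hZ.isLeast_tzero hv).2 hz0, hz.2]

end IsNonlinearStability

section Subquotient

variable {Λ : Type} [Ring Λ] {X Y : Type} [AddCommGroup X] [Module Λ X] [AddCommGroup Y]
  [Module Λ Y]

abbrev Subquotient (A B : Submodule Λ X) : Type := ↥B ⧸ comap B.subtype A

def subquotientEquiv (f : X →ₗ[Λ] Y) {A B : Submodule Λ X} {A' B' : Submodule Λ Y}
    (hA : A'.comap f = A) (hB : B.map f = B') : Subquotient A B ≃ₗ[Λ] Subquotient A' B' :=
  let ψ : ↥B →ₗ[Λ] Subquotient A' B' := (comap B'.subtype A').mkQ ∘ₗ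
    (f ∘ₗ B.subtype).codRestrict B' fun x => hB ▸ mem_map_of_mem x.2
  have hψ : Function.Surjective ψ := (mkQ_surjective _).comp fun y => by
    obtain ⟨x, hx, hxy⟩ := (hB ▸ y.2 : (y : Y) ∈ B.map f)
    exact ⟨⟨x, hx⟩, Subtype.ext hxy⟩
  have hker : comap B.subtype A = LinearMap.ker ψ := by
    ext x
    simp [ψ, ← hA]
  (quotEquivOfEq _ _ hker).trans (ψ.quotKerEquivOfSurjective hψ)

def subquotientBotEquiv (B : Submodule Λ X) : Subquotient ⊥ B ≃ₗ[Λ] ↥B :=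
  quotEquivOfEqBot _ (by simp)

end Subquotient

section Modules

variable {Λ : Type} [Ring Λ]

structure IsDimensionVector
    (d : (N : Type) → [AddCommGroup N] → [Module Λ N] → Fin n → ℕ) : Prop where
  iso : ∀ (N N' : Type) [AddCommGroup N] [Module Λ N] [AddCommGroup N'] [Module Λ N']
    [IsNoetherian Λ N] [IsArtinian Λ N], (N ≃ₗ[Λ] N') → d N = d N'
  add : ∀ (N : Type) [AddCommGroup N] [Module Λ N] [IsNoetherian Λ N] [IsArtinian Λ N]
    (A : Submodule Λ N), d ↥A + d (N ⧸ A) = d N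
  eq_zero_iff : ∀ (N : Type) [AddCommGroup N] [Module Λ N] [IsNoetherian Λ N] [IsArtinian Λ N],
    d N = 0 ↔ ∀ y : N, y = 0

variable {d : (N : Type) → [AddCommGroup N] → [Module Λ N] → Fin n → ℕ}
  {X : Type} [AddCommGroup X] [Module Λ X] [IsNoetherian Λ X] [IsArtinian Λ X]

namespace IsDimensionVector

lemma ne_zero (hd : IsDimensionVector d) (N : Type) [AddCommGroup N] [Module Λ N]
    [IsNoetherian Λ N] [IsArtinian Λ N] [Nontrivial N] : d N ≠ 0 := fun h =>
  let ⟨y, hy⟩ := exists_ne (0 : N)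
  hy ((hd.eq_zero_iff N).1 h y)

lemma ne_zero_of_ne_bot (hd : IsDimensionVector d) {A : Submodule Λ X} (hA : A ≠ ⊥) :
    d ↥A ≠ 0 :=
  have := nontrivial_iff_ne_bot.2 hA
  hd.ne_zero ↥A

lemma slopeGap_bot (hd : IsDimensionVector d) (t : ℝ) :
    slopeGap a b (d ↥(⊥ : Submodule Λ X)) t = 0 := by
  rw [(hd.eq_zero_iff _).2 fun y => Subtype.ext ((mem_bot Λ).1 y.2), slopeGap_zero]

lemma finite_range (hd : IsDimensionVector d) :
    (Set.range fun A : Submodule Λ X => d ↥A).Finite :=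
  (Set.finite_Icc 0 (d X)).subset <| by
    rintro _ ⟨A, rfl⟩
    exact ⟨fun _ => Nat.zero_le _, hd.add X A ▸ le_self_add⟩

lemma sum_quotient_lt (hd : IsDimensionVector d) {P : Submodule Λ X} (hP : P ≠ ⊥) :
    ∑ i, d (X ⧸ P) i < ∑ i, d X i := by
  have hsum := congrArg (fun v => ∑ i, v i) (hd.add X P)
  simp only [Pi.add_apply, Finset.sum_add_distrib] at hsum
  have hP' : ∑ i, d ↥P i ≠ 0 := fun h0 => hd.ne_zero_of_ne_bot hP <|
    funext fun i => Finset.sum_eq_zero_iff.1 h0 i (Finset.mem_univ i)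
  omega

lemma inf_add_map_mkQ (hd : IsDimensionVector d) (P Y : Submodule Λ X) :
    d ↥(P ⊓ Y) + d ↥(Y.map P.mkQ) = d ↥Y := by
  set f := P.mkQ ∘ₗ Y.subtype
  have hker : LinearMap.ker f = comap Y.subtype P := by
    rw [LinearMap.ker_comp, ker_mkQ]
  have hrange : LinearMap.range f = Y.map P.mkQ := by
    rw [LinearMap.range_comp, range_subtype]
  rw [← hd.add ↥Y (LinearMap.ker f),
    hd.iso _ _ (f.quotKerEquivRange.trans (LinearEquiv.ofEq _ _ hrange)), hker,
    hd.iso _ _ ((equivSubtypeMap Y _).trans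
      (LinearEquiv.ofEq _ _ ((map_comap_subtype Y P).trans (inf_comm Y P))))]

lemma slopeGap_inf_add_map_mkQ (hd : IsDimensionVector d) (P Y : Submodule Λ X) (t : ℝ) :
    slopeGap a b (d ↥(P ⊓ Y)) t + slopeGap a b (d ↥(Y.map P.mkQ)) t =
      slopeGap a b (d ↥Y) t := by
  rw [← slopeGap_add, hd.inf_add_map_mkQ]

lemma slopeGap_sup_add_inf (hd : IsDimensionVector d) (A B : Submodule Λ X) (t : ℝ) :
    slopeGap a b (d ↥(A ⊔ B)) t + slopeGap a b (d ↥(A ⊓ B)) t =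
      slopeGap a b (d ↥A) t + slopeGap a b (d ↥B) t := by
  have hsup := hd.slopeGap_inf_add_map_mkQ (a := a) (b := b) A (A ⊔ B) t
  rw [inf_sup_self, Submodule.map_sup, mkQ_map_self, bot_sup_eq] at hsup
  rw [← hsup, ← hd.slopeGap_inf_add_map_mkQ A B t]
  ring

end IsDimensionVector

/-- Every nonzero submodule `A` of `X` has `μ_τ(A) > τ`. -/
def SlopesAbove (d : (N : Type) → [AddCommGroup N] → [Module Λ N] → Fin n → ℕ)
    (a b : ℝ → Fin n → ℝ) (X : Type) [AddCommGroup X] [Module Λ X] (τ : ℝ) : Prop :=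
  ∀ A : Submodule Λ X, A ≠ ⊥ → 0 < slopeGap a b (d ↥A) τ

def SlopesAtLeast (d : (N : Type) → [AddCommGroup N] → [Module Λ N] → Fin n → ℕ)
    (a b : ℝ → Fin n → ℝ) (X : Type) [AddCommGroup X] [Module Λ X] (τ : ℝ) : Prop :=
  ∀ A : Submodule Λ X, 0 ≤ slopeGap a b (d ↥A) τ

def IsSemistablePair (d : (N : Type) → [AddCommGroup N] → [Module Λ N] → Fin n → ℕ)
    (a b : ℝ → Fin n → ℝ) (t : ℝ) (N : Type) [AddCommGroup N] [Module Λ N] : Prop :=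
  Semistable d a b t N ∧ muZ a b t (d N) = t

variable {τ t : ℝ}

lemma SlopesAbove.slopesAtLeast (hd : IsDimensionVector d) (h : SlopesAbove d a b X τ) :
    SlopesAtLeast d a b X τ := fun A => by
  rcases eq_or_ne A ⊥ with rfl | hA
  · exact (hd.slopeGap_bot τ).ge
  · exact (h A hA).le

lemma SlopesAtLeast.submodule (hd : IsDimensionVector d) (h : SlopesAtLeast d a b X t)
    (P : Submodule Λ X) : SlopesAtLeast d a b ↥P t := fun B => by
  rw [hd.iso _ _ (equivSubtypeMap P B)]
  exact h _

lemma SlopesAbove.of_submodule_of_quotient (hd : IsDimensionVector d) {P : Submodule Λ X}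
    (hP : SlopesAbove d a b ↥P τ) (hQ : SlopesAbove d a b (X ⧸ P) τ) :
    SlopesAbove d a b X τ := by
  intro Y hY
  have hinf : d ↥(comap P.subtype Y) = d ↥(P ⊓ Y) :=
    hd.iso _ _ ((equivSubtypeMap P _).trans (LinearEquiv.ofEq _ _ (map_comap_subtype P Y)))
  rw [← hd.slopeGap_inf_add_map_mkQ P Y, ← hinf]
  rcases eq_or_ne (Y.map P.mkQ) ⊥ with hmap | hmap
  · have hYP : Y ≤ P := ker_mkQ P ▸ LinearMap.le_ker_iff_map.2 hmap
    have hcomap : comap P.subtype Y ≠ ⊥ := fun h => hY <| by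
      rw [← inf_eq_right.2 hYP, ← map_comap_subtype, h, Submodule.map_bot]
    rw [hmap, hd.slopeGap_bot, add_zero]
    exact hP _ hcomap
  · exact add_pos_of_nonneg_of_pos (hP.slopesAtLeast hd _) (hQ _ hmap)

lemma isOpen_setOf_slopesAbove (hd : IsDimensionVector d) (hZ : IsNonlinearStability a b) :
    IsOpen {τ | SlopesAbove d a b X τ} := by
  have hV : {v | ∃ A : Submodule Λ X, A ≠ ⊥ ∧ d ↥A = v}.Finite :=
    hd.finite_range.subset fun _ ⟨A, _, hA⟩ => ⟨A, hA⟩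
  have hset : {τ | SlopesAbove d a b X τ} =
      ⋂ v ∈ {v | ∃ A : Submodule Λ X, A ≠ ⊥ ∧ d ↥A = v}, {τ | 0 < slopeGap a b v τ} := by
    ext τ
    simp [SlopesAbove]
  rw [hset]
  exact hV.isOpen_biInter fun v _ => isOpen_lt continuous_const (hZ.continuous_slopeGap v)

lemma isClosed_setOf_slopesAtLeast {X : Type} [AddCommGroup X] [Module Λ X]
    (hZ : IsNonlinearStability a b) :
    IsClosed {τ | SlopesAtLeast d a b X τ} := by
  simp only [SlopesAtLeast, Set.ofPred_forall]
  exact isClosed_iInter fun A => isClosed_le continuous_const (hZ.continuous_slopeGap _)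

lemma slopesAtLeast_of_forall_lt (hd : IsDimensionVector d) (hZ : IsNonlinearStability a b)
    (h : ∀ τ < t, SlopesAbove d a b X τ) : SlopesAtLeast d a b X t :=
  closure_minimal (s := Set.Iio t) (fun τ hτ => (h τ hτ).slopesAtLeast hd)
    (isClosed_setOf_slopesAtLeast hZ) (by rw [closure_Iio]; exact Set.mem_Iic.2 le_rfl)

section SemistablePair

variable {N N' : Type} [AddCommGroup N] [Module Λ N] [IsNoetherian Λ N] [IsArtinian Λ N]
  [AddCommGroup N'] [Module Λ N']

lemma IsSemistablePair.of_equiv (hd : IsDimensionVector d) (e : N ≃ₗ[Λ] N')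
    (h : IsSemistablePair d a b t N) : IsSemistablePair d a b t N' := by
  have hN : d N = d N' := hd.iso N N' e
  refine ⟨fun A hA => ?_, hN ▸ h.2⟩
  rw [← hN, ← hd.iso _ _ (e.symm.submoduleMap A).symm]
  exact h.1 _ (by rwa [Ne, Submodule.map_eq_bot_iff])

lemma IsSemistablePair.slopesAtLeast (hd : IsDimensionVector d) (hZ : IsNonlinearStability a b)
    (h : IsSemistablePair d a b t N) : SlopesAtLeast d a b N t := fun A => by
  rcases eq_or_ne A ⊥ with rfl | hA
  · exact (hd.slopeGap_bot t).ge
  · have hμ := h.1 A hA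
    rw [h.2] at hμ
    exact (hZ.le_muZ_iff (hd.ne_zero_of_ne_bot hA) t).1 hμ

lemma IsSemistablePair.slopeGap_eq_zero (hd : IsDimensionVector d)
    (hZ : IsNonlinearStability a b) [Nontrivial N] (h : IsSemistablePair d a b t N) :
    slopeGap a b (d N) t = 0 :=
  (hZ.muZ_eq_iff (hd.ne_zero N) t).1 h.2

lemma isSemistablePair_of_slopesAtLeast (hd : IsDimensionVector d)
    (hZ : IsNonlinearStability a b) [Nontrivial N] (h : SlopesAtLeast d a b N t)
    (h0 : slopeGap a b (d N) t = 0) : IsSemistablePair d a b t N := by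
  have hμ := (hZ.muZ_eq_iff (hd.ne_zero N) t).2 h0
  refine ⟨fun A hA => ?_, hμ⟩
  rw [hμ]
  exact (hZ.le_muZ_iff (hd.ne_zero_of_ne_bot hA) t).2 (h A)

lemma deriv_slopeGap_neg_of_slopesAtLeast (hd : IsDimensionVector d)
    (hZ : IsNonlinearStability a b) (hgreen : ZGreen d a b) [Nontrivial N]
    (h : SlopesAtLeast d a b N t) (h0 : slopeGap a b (d N) t = 0) :
    deriv (slopeGap a b (d N)) t < 0 :=
  have hN := isSemistablePair_of_slopesAtLeast hd hZ h h0
  hZ.deriv_slopeGap_neg (hd.ne_zero N) h0 (hgreen N t (exists_ne 0) hN.1 hN.2)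

end SemistablePair

lemma SlopesAtLeast.eventually_slopesAbove (hd : IsDimensionVector d)
    (hZ : IsNonlinearStability a b) (hgreen : ZGreen d a b) (h : SlopesAtLeast d a b X t) :
    ∀ᶠ τ in 𝓝[<] t, SlopesAbove d a b X τ := by
  have hV : {v | ∃ A : Submodule Λ X, A ≠ ⊥ ∧ d ↥A = v}.Finite :=
    hd.finite_range.subset fun _ ⟨A, _, hA⟩ => ⟨A, hA⟩
  have hev : ∀ v ∈ {v | ∃ A : Submodule Λ X, A ≠ ⊥ ∧ d ↥A = v},
      ∀ᶠ τ in 𝓝[<] t, 0 < slopeGap a b v τ := by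
    rintro _ ⟨A, hA, rfl⟩
    rcases (h A).lt_or_eq with hpos | hzero
    · exact ((hZ.continuous_slopeGap _).continuousAt.eventually (lt_mem_nhds hpos)).filter_mono
        nhdsWithin_le_nhds
    · have := nontrivial_iff_ne_bot.2 hA
      exact eventually_pos_nhdsLT_of_deriv_neg hzero.symm
        (deriv_slopeGap_neg_of_slopesAtLeast hd hZ hgreen (h.submodule hd A) hzero.symm)
  filter_upwards [hV.eventually_all.2 hev] with τ hτ A hA using hτ _ ⟨A, hA, rfl⟩

/-- At the last time `s ≤ t` at which positivity fails, some `A` has `μ_s(A) = s` and is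
semistable, so by greenness `μ_σ(A) < σ` just after `s`. -/
lemma SlopesAbove.of_le (hd : IsDimensionVector d) (hZ : IsNonlinearStability a b)
    (hgreen : ZGreen d a b) (h : SlopesAbove d a b X t) (hτ : τ ≤ t) :
    SlopesAbove d a b X τ := by
  by_contra hbad
  set S := Set.Icc τ t ∩ {σ | ¬SlopesAbove d a b X σ}
  have hSbdd : BddAbove S := ⟨t, fun _ hσ => hσ.1.2⟩
  have hS : sSup S ∈ S := (isClosed_Icc.inter (isOpen_setOf_slopesAbove hd hZ).isClosed_compl
    ).csSup_mem ⟨τ, ⟨le_rfl, hτ⟩, hbad⟩ hSbdd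
  set s := sSup S
  have hst : s < t := lt_of_le_of_ne hS.1.2 fun hs => hS.2 (hs ▸ h)
  have habove : ∀ σ ∈ Set.Ioc s t, SlopesAbove d a b X σ := fun σ hσ => by
    by_contra hσ'
    exact (le_csSup hSbdd ⟨⟨hS.1.1.trans hσ.1.le, hσ.2⟩, hσ'⟩).not_gt hσ.1
  have hleast : SlopesAtLeast d a b X s :=
    closure_minimal (fun σ hσ => (habove σ hσ).slopesAtLeast hd)
      (isClosed_setOf_slopesAtLeast hZ)
      (by rw [closure_Ioc hst.ne]; exact ⟨le_rfl, hst.le⟩)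
  obtain ⟨A, hA, hAs⟩ : ∃ A : Submodule Λ X, A ≠ ⊥ ∧ slopeGap a b (d ↥A) s ≤ 0 := by
    simpa [SlopesAbove] using hS.2
  have hA0 : slopeGap a b (d ↥A) s = 0 := le_antisymm hAs (hleast A)
  have := nontrivial_iff_ne_bot.2 hA
  have hneg := eventually_neg_nhdsGT_of_deriv_neg hA0
    (deriv_slopeGap_neg_of_slopesAtLeast hd hZ hgreen (hleast.submodule hd A) hA0)
  have hpos : ∀ᶠ σ in 𝓝[>] s, 0 < slopeGap a b (d ↥A) σ :=
    Filter.eventually_of_mem (Ioc_mem_nhdsGT hst) fun σ hσ => habove σ hσ A hA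
  obtain ⟨σ, h1, h2⟩ := (hneg.and hpos).exists
  exact h1.not_gt h2

lemma SlopesAtLeast.slopesAbove_of_lt (hd : IsDimensionVector d) (hZ : IsNonlinearStability a b)
    (hgreen : ZGreen d a b) (h : SlopesAtLeast d a b X t) (hτ : τ < t) :
    SlopesAbove d a b X τ := by
  obtain ⟨σ, hσ, hτσ, -⟩ :=
    ((h.eventually_slopesAbove hd hZ hgreen).and (Ioo_mem_nhdsLT hτ)).exists
  exact hσ.of_le hd hZ hgreen hτσ.le

lemma finite_setOf_tzero (hd : IsDimensionVector d) :
    {s : ℝ | ∃ A : Submodule Λ X, A ≠ ⊥ ∧ s = tzero a b (d ↥A)}.Finite :=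
  (hd.finite_range.image (tzero a b)).subset <| by
    rintro s ⟨A, -, rfl⟩
    exact ⟨d ↥A, ⟨A, rfl⟩, rfl⟩

lemma tone_le_tzero (hd : IsDimensionVector d) {A : Submodule Λ X} (hA : A ≠ ⊥) :
    tone d a b X ≤ tzero a b (d ↥A) :=
  csInf_le (finite_setOf_tzero hd).bddBelow ⟨A, hA, rfl⟩

lemma slopesAbove_of_lt_tone (hd : IsDimensionVector d) (hZ : IsNonlinearStability a b)
    (hτ : τ < tone d a b X) : SlopesAbove d a b X τ := fun _ hA =>
  hZ.slopeGap_pos_of_lt_tzero (hd.ne_zero_of_ne_bot hA) (hτ.trans_le (tone_le_tzero hd hA))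

lemma exists_slopeGap_tone_eq_zero (hd : IsDimensionVector d) (hZ : IsNonlinearStability a b)
    [Nontrivial X] :
    ∃ A : Submodule Λ X, A ≠ ⊥ ∧ slopeGap a b (d ↥A) (tone d a b X) = 0 := by
  obtain ⟨A, hA, hAt⟩ :
      tone d a b X ∈ {s | ∃ A : Submodule Λ X, A ≠ ⊥ ∧ s = tzero a b (d ↥A)} :=
    Set.Nonempty.csInf_mem ⟨_, ⊤, top_ne_bot, rfl⟩ (finite_setOf_tzero hd)
  refine ⟨A, hA, ?_⟩
  rw [hAt]
  exact (hZ.isLeast_tzero (hd.ne_zero_of_ne_bot hA)).1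

lemma tone_eq_of (hd : IsDimensionVector d) (hZ : IsNonlinearStability a b)
    (hpos : ∀ τ < t, SlopesAbove d a b X τ) {A : Submodule Λ X} (hA : A ≠ ⊥)
    (h0 : slopeGap a b (d ↥A) t = 0) : tone d a b X = t := by
  obtain ⟨x, -, hx⟩ := (Submodule.ne_bot_iff A).1 hA
  have := nontrivial_of_ne x 0 hx
  obtain ⟨B, hB, hB0⟩ := exists_slopeGap_tone_eq_zero hd hZ (X := X)
  exact le_antisymm
    ((tone_le_tzero hd hA).trans ((hZ.isLeast_tzero (hd.ne_zero_of_ne_bot hA)).2 h0))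
    (not_lt.1 fun hlt => (hpos _ hlt B hB).ne' hB0)

lemma SlopesAtLeast.slopeGap_sup_eq_zero (hd : IsDimensionVector d) (h : SlopesAtLeast d a b X t)
    {A B : Submodule Λ X} (hA : slopeGap a b (d ↥A) t = 0) (hB : slopeGap a b (d ↥B) t = 0) :
    slopeGap a b (d ↥(A ⊔ B)) t = 0 := by
  have := hd.slopeGap_sup_add_inf (a := a) (b := b) A B t
  linarith [h (A ⊔ B), h (A ⊓ B)]

lemma SlopesAtLeast.exists_isGreatest (hd : IsDimensionVector d) (h : SlopesAtLeast d a b X t) :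
    ∃ P, IsGreatest {A : Submodule Λ X | slopeGap a b (d ↥A) t = 0} P := by
  obtain ⟨P, hP, hmax⟩ := set_has_maximal_iff_noetherian.2 inferInstance
    {A : Submodule Λ X | slopeGap a b (d ↥A) t = 0} ⟨⊥, hd.slopeGap_bot t⟩
  refine ⟨P, hP, fun A hA => ?_⟩
  have hsup := le_sup_left.eq_of_not_lt (hmax _ (h.slopeGap_sup_eq_zero hd hP hA))
  exact le_sup_right.trans hsup.ge

lemma SlopesAtLeast.le_of_slopesAbove_quotient (hd : IsDimensionVector d)
    (h : SlopesAtLeast d a b X t) {P : Submodule Λ X} (hP : SlopesAbove d a b (X ⧸ P) t)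
    {A : Submodule Λ X} (hA : slopeGap a b (d ↥A) t = 0) : A ≤ P := by
  by_contra hAP
  have hmap : A.map P.mkQ ≠ ⊥ := fun h0 => hAP (ker_mkQ P ▸ LinearMap.le_ker_iff_map.2 h0)
  have := hd.slopeGap_inf_add_map_mkQ (a := a) (b := b) P A t
  linarith [h (P ⊓ A), hP _ hmap]

lemma SlopesAtLeast.slopesAbove_quotient (hd : IsDimensionVector d) (h : SlopesAtLeast d a b X t)
    {P : Submodule Λ X} (hP : IsGreatest {A : Submodule Λ X | slopeGap a b (d ↥A) t = 0} P) :
    SlopesAbove d a b (X ⧸ P) t := by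
  intro Y hY
  have hPC : P ≤ Y.comap P.mkQ := (ker_mkQ P).ge.trans (LinearMap.ker_le_comap _)
  have hsplit := hd.slopeGap_inf_add_map_mkQ (a := a) (b := b) P (Y.comap P.mkQ) t
  rw [inf_eq_left.2 hPC, map_comap_eq_of_surjective (mkQ_surjective P), hP.1, zero_add] at hsplit
  by_contra! hle
  have hC := hP.2 (le_antisymm (hsplit ▸ hle) (h _))
  exact hY (eq_bot_iff.2 ((map_comap_eq_of_surjective (mkQ_surjective P) Y).ge.trans
    ((map_mono hC).trans (mkQ_map_self P).le)))

end Modules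

end NonlinearStability

open NonlinearStability

namespace IsHNFilt

variable {n : ℕ} {a b : ℝ → Fin n → ℝ} {Λ : Type} [Ring Λ]
  {d : (N : Type) → [AddCommGroup N] → [Module Λ N] → Fin n → ℕ}
  {X : Type} [AddCommGroup X] [Module Λ X] {τ t : ℝ} {m : ℕ}

lemma of_subsingleton [Subsingleton X] :
    IsHNFilt d a b X 0 (fun _ => ⊥) (fun i => i.elim0) :=
  ⟨Subsingleton.strictMono (α := Fin 1) _, rfl, Subsingleton.elim _ _, Subsingleton.strictMono _,
    fun i => i.elim0⟩

section

variable {F : Fin (m + 1) → Submodule Λ X} {ts : Fin m → ℝ}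

lemma isSemistablePair (h : IsHNFilt d a b X m F ts) (i : Fin m) :
    IsSemistablePair d a b (ts i) (Subquotient (F i.castSucc) (F i.succ)) :=
  h.2.2.2.2 i

lemma top_eq_bot_iff (h : IsHNFilt d a b X m F ts) : (⊤ : Submodule Λ X) = ⊥ ↔ m = 0 := by
  refine ⟨fun htop => Nat.eq_zero_of_not_pos fun hm => ?_, ?_⟩
  · have hlt := h.1 (Fin.lt_def.2 (by simpa using hm) : (0 : Fin (m + 1)) < Fin.last m)
    rw [h.2.1, h.2.2.1, htop] at hlt
    exact hlt.false
  · rintro rfl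
    rw [← h.2.2.1, ← h.2.1]
    rfl

end

section

variable {F : Fin (m + 1 + 1) → Submodule Λ X} {ts : Fin (m + 1) → ℝ}

lemma one_ne_bot (h : IsHNFilt d a b X (m + 1) F ts) : F 1 ≠ ⊥ :=
  h.2.1 ▸ (h.1 Fin.zero_lt_one).ne'

lemma one_le (h : IsHNFilt d a b X (m + 1) F ts) (k : Fin (m + 1)) : F 1 ≤ F k.succ :=
  h.1.monotone (Fin.succ_zero_eq_one ▸ Fin.succ_le_succ_iff.2 (Fin.zero_le k))

end

variable [IsNoetherian Λ X] [IsArtinian Λ X]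

lemma cons (hd : IsDimensionVector d) {P : Submodule Λ X} (hP : P ≠ ⊥)
    (hPt : IsSemistablePair d a b t ↥P) {G : Fin (m + 1) → Submodule Λ (X ⧸ P)}
    {ts : Fin m → ℝ} (h : IsHNFilt d a b (X ⧸ P) m G ts) (ht : ∀ i, t < ts i) :
    IsHNFilt d a b X (m + 1) (Fin.cons ⊥ fun k => (G k).comap P.mkQ) (Fin.cons t ts) := by
  have hG0 : (G 0).comap P.mkQ = P := by rw [h.2.1, comap_bot, ker_mkQ]
  refine ⟨Fin.strictMono_cons.2 ⟨fun j => ?_, (comap_strictMono_of_surjective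
    (mkQ_surjective P)).comp h.1⟩, rfl, ?_, Fin.strictMono_cons.2 ⟨ht, h.2.2.2.1⟩,
    fun i => ?_⟩
  · exact bot_lt_iff_ne_bot.2 (ne_bot_of_le_ne_bot hP
      (hG0.ge.trans (comap_mono (h.1.monotone (Fin.zero_le j)))))
  · rw [← Fin.succ_last, Fin.cons_succ, h.2.2.1, comap_top]
  · cases i using Fin.cases with
    | zero =>
      exact (hPt.of_equiv hd (subquotientBotEquiv P).symm).of_equiv hd
        (subquotientEquiv LinearMap.id (by simp) (by simp [hG0]))
    | succ j =>
      exact (h.isSemistablePair j).of_equiv hd (subquotientEquiv P.mkQ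
        (by simp) (by simp [map_comap_eq_of_surjective (mkQ_surjective P)])).symm

variable {F : Fin (m + 1 + 1) → Submodule Λ X} {ts : Fin (m + 1) → ℝ}

lemma isSemistablePair_one (hd : IsDimensionVector d) (h : IsHNFilt d a b X (m + 1) F ts) :
    IsSemistablePair d a b (ts 0) ↥(F 1) :=
  ((h.isSemistablePair 0).of_equiv hd (subquotientEquiv LinearMap.id
    (by rw [comap_id, Fin.castSucc_zero, h.2.1]) (by rw [map_id, Fin.succ_zero_eq_one]))).of_equiv
    hd (subquotientBotEquiv _)

lemma slopeGap_one (hd : IsDimensionVector d) (hZ : IsNonlinearStability a b)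
    (h : IsHNFilt d a b X (m + 1) F ts) : slopeGap a b (d ↥(F 1)) (ts 0) = 0 :=
  have := nontrivial_iff_ne_bot.2 h.one_ne_bot
  (h.isSemistablePair_one hd).slopeGap_eq_zero hd hZ

lemma quotient (hd : IsDimensionVector d) (h : IsHNFilt d a b X (m + 1) F ts)
    {P : Submodule Λ X} (hP : F 1 = P) :
    IsHNFilt d a b (X ⧸ P) m (fun k => (F k.succ).map P.mkQ) (fun i => ts i.succ) := by
  subst hP
  have hcomap : ∀ k : Fin (m + 1), ((F k.succ).map (F 1).mkQ).comap (F 1).mkQ = F k.succ :=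
    fun k => by rw [comap_map_mkQ, sup_eq_right.2 (h.one_le k)]
  refine ⟨fun i j hij => ?_, ?_, ?_, h.2.2.2.1.comp (Fin.strictMono_succ), fun i => ?_⟩
  · refine lt_of_le_of_ne (map_mono (h.1.monotone (Fin.succ_le_succ_iff.2 hij.le))) fun he => ?_
    exact (h.1 (Fin.succ_lt_succ_iff.2 hij)).ne
      (by rw [← hcomap i, ← hcomap j]; exact congrArg _ he)
  · simp only [Fin.succ_zero_eq_one, mkQ_map_self]
  · simp only [Fin.succ_last, h.2.2.1, Submodule.map_top, range_mkQ]
  · exact (h.isSemistablePair i.succ).of_equiv hd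
      (subquotientEquiv (F 1).mkQ (by rw [hcomap, Fin.succ_castSucc]) rfl)

lemma slopesAbove (hd : IsDimensionVector d) (hZ : IsNonlinearStability a b)
    (hgreen : ZGreen d a b) {m : ℕ} {F : Fin (m + 1) → Submodule Λ X} {ts : Fin m → ℝ}
    (h : IsHNFilt d a b X m F ts) (hτ : ∀ i, τ < ts i) : SlopesAbove d a b X τ := by
  induction m generalizing X with
  | zero =>
    intro A hA
    exact absurd (eq_bot_iff.2 (le_top.trans (h.top_eq_bot_iff.2 rfl).le)) hA
  | succ m ih =>
    refine SlopesAbove.of_submodule_of_quotient hd (P := F 1) ?_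
      (ih (h.quotient hd rfl) fun i => hτ i.succ)
    exact ((h.isSemistablePair_one hd).slopesAtLeast hd hZ).slopesAbove_of_lt hd hZ hgreen (hτ 0)

lemma slopesAbove_of_lt (hd : IsDimensionVector d) (hZ : IsNonlinearStability a b)
    (hgreen : ZGreen d a b) (h : IsHNFilt d a b X (m + 1) F ts) (hτ : τ < ts 0) :
    SlopesAbove d a b X τ :=
  h.slopesAbove hd hZ hgreen fun i => hτ.trans_le (h.2.2.2.1.monotone (Fin.zero_le i))

lemma slopesAbove_quotient (hd : IsDimensionVector d) (hZ : IsNonlinearStability a b)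
    (hgreen : ZGreen d a b) (h : IsHNFilt d a b X (m + 1) F ts) :
    SlopesAbove d a b (X ⧸ F 1) (ts 0) :=
  (h.quotient hd rfl).slopesAbove hd hZ hgreen fun i => h.2.2.2.1 (Fin.succ_pos i)

lemma tone_eq (hd : IsDimensionVector d) (hZ : IsNonlinearStability a b) (hgreen : ZGreen d a b)
    (h : IsHNFilt d a b X (m + 1) F ts) : tone d a b X = ts 0 :=
  tone_eq_of hd hZ (fun _ => h.slopesAbove_of_lt hd hZ hgreen) h.one_ne_bot (h.slopeGap_one hd hZ)

lemma lt_of_forall_le_slopesAbove (hd : IsDimensionVector d) (hZ : IsNonlinearStability a b)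
    {m : ℕ} {F : Fin (m + 1) → Submodule Λ X} {ts : Fin m → ℝ} (h : IsHNFilt d a b X m F ts)
    (ht : ∀ σ ≤ t, SlopesAbove d a b X σ) (i : Fin m) : t < ts i := by
  obtain ⟨k, rfl⟩ := Nat.exists_eq_succ_of_ne_zero i.pos.ne'
  refine (not_le.1 fun hle => ?_).trans_le (h.2.2.2.1.monotone (Fin.zero_le i))
  exact (ht _ hle _ h.one_ne_bot).ne' (h.slopeGap_one hd hZ)

lemma unique (hd : IsDimensionVector d) (hZ : IsNonlinearStability a b) (hgreen : ZGreen d a b)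
    {m₁ m₂ : ℕ} {F₁ : Fin (m₁ + 1) → Submodule Λ X} {F₂ : Fin (m₂ + 1) → Submodule Λ X}
    {ts₁ : Fin m₁ → ℝ} {ts₂ : Fin m₂ → ℝ} (h₁ : IsHNFilt d a b X m₁ F₁ ts₁)
    (h₂ : IsHNFilt d a b X m₂ F₂ ts₂) : m₁ = m₂ ∧ HEq F₁ F₂ ∧ HEq ts₁ ts₂ := by
  induction m₁ generalizing X m₂ with
  | zero =>
    obtain rfl : m₂ = 0 := h₂.top_eq_bot_iff.1 (h₁.top_eq_bot_iff.2 rfl)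
    refine ⟨rfl, heq_of_eq (funext fun k => ?_), heq_of_eq (funext fun i => i.elim0)⟩
    rw [Fin.fin_one_eq_zero k, h₁.2.1, h₂.2.1]
  | succ k ih =>
    obtain ⟨l, rfl⟩ := Nat.exists_eq_succ_of_ne_zero fun hm₂ =>
      k.succ_ne_zero (h₁.top_eq_bot_iff.1 (h₂.top_eq_bot_iff.2 hm₂))
    have hts : ts₁ 0 = ts₂ 0 :=
      (h₁.tone_eq hd hZ hgreen).symm.trans (h₂.tone_eq hd hZ hgreen)
    have hX : SlopesAtLeast d a b X (ts₁ 0) :=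
      slopesAtLeast_of_forall_lt hd hZ fun _ => h₁.slopesAbove_of_lt hd hZ hgreen
    have h₂Q := h₂.slopesAbove_quotient hd hZ hgreen
    have h₂0 := h₂.slopeGap_one hd hZ
    rw [← hts] at h₂Q h₂0
    have hF : F₁ 1 = F₂ 1 := le_antisymm
      (hX.le_of_slopesAbove_quotient hd h₂Q (h₁.slopeGap_one hd hZ))
      (hX.le_of_slopesAbove_quotient hd (h₁.slopesAbove_quotient hd hZ hgreen) h₂0)
    obtain ⟨rfl, hFq, htsq⟩ := ih (h₁.quotient hd rfl) (h₂.quotient hd hF.symm)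
    refine ⟨rfl, heq_of_eq (funext fun r => ?_), heq_of_eq (funext fun r => ?_)⟩
    · cases r using Fin.cases with
      | zero => rw [h₁.2.1, h₂.2.1]
      | succ j =>
        have hj := congrArg (comap (F₁ 1).mkQ) (congrFun (eq_of_heq hFq) j)
        rwa [comap_map_mkQ, comap_map_mkQ, sup_eq_right.2 (h₁.one_le j),
          sup_eq_right.2 (hF ▸ h₂.one_le j)] at hj
    · cases r using Fin.cases with
      | zero => exact hts
      | succ j => exact congrFun (eq_of_heq htsq) j

end IsHNFilt

namespace NonlinearStability

variable {n : ℕ} {a b : ℝ → Fin n → ℝ} {Λ : Type} [Ring Λ]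
  {d : (N : Type) → [AddCommGroup N] → [Module Λ N] → Fin n → ℕ}

/-- By induction on the total dimension: `X` is the extension of its maximal destabilizing
submodule at time `tone`, which is semistable, by a quotient all of whose HN times are later. -/
theorem exists_isHNFilt (hd : IsDimensionVector d) (hZ : IsNonlinearStability a b)
    (hgreen : ZGreen d a b) (X : Type) [AddCommGroup X] [Module Λ X] [IsNoetherian Λ X]
    [IsArtinian Λ X] : ∃ m F ts, IsHNFilt d a b X m F ts := by
  generalize hs : ∑ i, d X i = s
  induction s using Nat.strong_induction_on generalizing X with
  | _ s ih =>
  rcases subsingleton_or_nontrivial X with _ | _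
  · exact ⟨0, _, _, IsHNFilt.of_subsingleton⟩
  have hX : SlopesAtLeast d a b X (tone d a b X) :=
    slopesAtLeast_of_forall_lt hd hZ fun _ => slopesAbove_of_lt_tone hd hZ
  obtain ⟨A, hA, hA0⟩ := exists_slopeGap_tone_eq_zero hd hZ (X := X)
  obtain ⟨P, hP⟩ := hX.exists_isGreatest hd
  have hPbot : P ≠ ⊥ := ne_bot_of_le_ne_bot hA (hP.2 hA0)
  have := nontrivial_iff_ne_bot.2 hPbot
  obtain ⟨m, G, ts, hG⟩ := ih _ (hs ▸ hd.sum_quotient_lt hPbot) (X ⧸ P) rfl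
  have hQ : ∀ σ ≤ tone d a b X, SlopesAbove d a b (X ⧸ P) σ := fun _ =>
    (hX.slopesAbove_quotient hd hP).of_le hd hZ hgreen
  exact ⟨m + 1, _, _, hG.cons hd hPbot
    (isSemistablePair_of_slopesAtLeast hd hZ (hX.submodule hd P) hP.1)
    (hG.lt_of_forall_le_slopesAbove hd hZ hQ)⟩

end NonlinearStability

/-- For a green nonlinear stability function `Z_•`, every `Λ`-module `M`
admits a unique Harder–Narasimhan filtration: unique `t₁ < ... < t_m` and a unique
filtration `0 = M₀ ⊊ M₁ ⊊ ... ⊊ M_m = M` with `M_k/M_{k−1}` `Z_{t_k}`-semistable of slope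
`μ_{t_k} = t_k`; moreover `t₁ = t₁(M)`. -/
theorem stmt11 (Λ : Type) [Ring Λ] {n : ℕ}
    (d : (N : Type) → [AddCommGroup N] → [Module Λ N] → Fin n → ℕ)
    (hiso : ∀ (N N' : Type) [AddCommGroup N] [Module Λ N] [AddCommGroup N'] [Module Λ N']
      [IsNoetherian Λ N] [IsArtinian Λ N], (N ≃ₗ[Λ] N') → d N = d N')
    (hadd : ∀ (N : Type) [AddCommGroup N] [Module Λ N] [IsNoetherian Λ N] [IsArtinian Λ N]
      (A : Submodule Λ N), d ↥A + d (N ⧸ A) = d N)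
    (hzero : ∀ (N : Type) [AddCommGroup N] [Module Λ N] [IsNoetherian Λ N] [IsArtinian Λ N],
      (d N = 0 ↔ ∀ y : N, y = 0))
    (a b : ℝ → Fin n → ℝ)
    (hbpos : ∀ t i, 0 < b t i)
    (hC1a : ∀ i, ContDiff ℝ 1 (fun t => a t i))
    (hC1b : ∀ i, ContDiff ℝ 1 (fun t => b t i))
    (hconst : ∃ T : ℝ, 0 < T ∧ (∀ t, T ≤ t → a t = a T ∧ b t = b T) ∧
      (∀ t, t ≤ -T → a t = a (-T) ∧ b t = b (-T)))
    (hgreen : ZGreen d a b)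
    (M : Type) [AddCommGroup M] [Module Λ M] [IsNoetherian Λ M] [IsArtinian Λ M] :
    ∃ (m : ℕ) (F : Fin (m + 1) → Submodule Λ M) (ts : Fin m → ℝ),
      IsHNFilt d a b M m F ts ∧
      (∀ (m' : ℕ) (F' : Fin (m' + 1) → Submodule Λ M) (ts' : Fin m' → ℝ),
        IsHNFilt d a b M m' F' ts' → m' = m ∧ HEq F' F ∧ HEq ts' ts) ∧
      (∀ h : 0 < m, ts ⟨0, h⟩ = tone d a b M) := by
  obtain ⟨T, -, hTtop, hTbot⟩ := hconst
  have hd : IsDimensionVector d := ⟨hiso, hadd, hzero⟩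
  have hZ : IsNonlinearStability a b :=
    ⟨hbpos, fun i => (hC1a i).differentiable one_ne_zero,
      fun i => (hC1b i).differentiable one_ne_zero, ⟨-T, hTbot⟩, ⟨T, hTtop⟩⟩
  obtain ⟨m, F, ts, hF⟩ := exists_isHNFilt hd hZ hgreen M
  refine ⟨m, F, ts, hF, fun m' F' ts' hF' => hF'.unique hd hZ hgreen hF, fun hm => ?_⟩
  obtain ⟨k, rfl⟩ := Nat.exists_eq_succ_of_ne_zero hm.ne'
  exact (hF.tone_eq hd hZ hgreen).symm
end
end
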